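/- arXiv:math-ph/0010013 — 4 statements merged into one kernel-verified Lean document; each statement's English description precedes it below -/
import Mathlib

section
/- Let p ∈ (1,∞) and let μ and ν be positive Borel measures on ℝ such that for every z ∈ ℂ with Im z ≠ 0 one has ∫_ℝ |E−z|^{−p} dμ(E) = ∫_ℝ |E−z|^{−p} dν(E) < ∞. Then μ = ν. -/
open MeasureTheory Filter Topology Set Real
open scoped ENNReal


noncomputable def Wf (p : ℝ) (u : ℝ) : ℝ≥0∞ := ENNReal.ofReal ((1 + u^2) ^ (-p/2))

lemma contWreal (p : ℝ) : Continuous fun u : ℝ => (1 + u^2) ^ (-p/2) := by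
  apply Continuous.rpow_const (by continuity)
  intro u
  exact Or.inl (by positivity)

lemma Wf_meas (p : ℝ) : Measurable (Wf p) :=
  ENNReal.measurable_ofReal.comp (contWreal p).measurable

lemma Wf_lintegral_lt_top {p : ℝ} (hp : 1 < p) : ∫⁻ u, Wf p u < ⊤ := by
  have hi : Integrable (fun u : ℝ => (1 + u^2) ^ (-p/2)) := by
    have := integrable_rpow_neg_one_add_norm_sq (E := ℝ) (μ := volume) (r := p) (by simpa using hp)
    simpa [Real.norm_eq_abs, sq_abs] using this
  have h0 : 0 ≤ᵐ[(volume : Measure ℝ)] fun u : ℝ => (1 + u^2) ^ (-p/2) :=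
    Filter.Eventually.of_forall fun u => by positivity
  exact (hasFiniteIntegral_iff_ofReal h0).1 hi.hasFiniteIntegral

lemma Wf_lintegral_pos (p : ℝ) : 0 < ∫⁻ u, Wf p u := by
  rw [lintegral_pos_iff_support (Wf_meas p)]
  have : Function.support (Wf p) = Set.univ := by
    ext u
    simp only [Function.mem_support, Set.mem_univ, iff_true, Wf]
    exact (ENNReal.ofReal_pos.2 (by positivity)).ne'
  rw [this]
  simp [Real.volume_univ]

lemma map_affine (b : ℝ) (hb : b ≠ 0) (E : ℝ) :
    Measure.map (fun u : ℝ => E - b * u) volume = ENNReal.ofReal |b|⁻¹ • volume := by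
  have h1 : (fun u : ℝ => E - b * u) = (fun x : ℝ => E + x) ∘ (fun u : ℝ => (-b) * u) := by
    funext u; simp [sub_eq_add_neg]
  rw [h1, ← Measure.map_map (measurable_const_add E) (measurable_const_mul _),
    Real.map_volume_mul_left (neg_ne_zero.2 hb)]
  simp only [abs_neg, abs_inv, Measure.map_smul, map_add_left_eq_self]

lemma lintegral_change (b : ℝ) (hb : 0 < b) (E : ℝ) (f : ℝ → ℝ≥0∞) (hf : Measurable f) :
    ∫⁻ a, f a = ENNReal.ofReal b * ∫⁻ u, f (E - b * u) := by
  have h := lintegral_map (μ := volume) hf (show Measurable fun u : ℝ => E - b * u by fun_prop)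
  rw [map_affine b hb.ne' E] at h
  rw [lintegral_smul_measure] at h
  rw [← h, smul_eq_mul, ← mul_assoc, ← ENNReal.ofReal_mul hb.le, abs_of_pos hb,
    mul_inv_cancel₀ hb.ne', ENNReal.ofReal_one, one_mul]

lemma ker_subst {p : ℝ} (b : ℝ) (hb : 0 < b) (u E : ℝ) :
    b * (b ^ (p-1) * ((E - (E - b * u))^2 + b^2) ^ (-p/2)) = (1 + u^2) ^ (-p/2) := by
  have h1 : (E - (E - b * u)) ^ 2 + b ^ 2 = b^2 * (1 + u^2) := by ring
  rw [h1, Real.mul_rpow (by positivity) (by positivity)]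
  have h2 : (b ^ 2 : ℝ) ^ (-p/2 : ℝ) = b ^ (-p) := by
    rw [← Real.rpow_natCast b 2, ← Real.rpow_mul hb.le]
    norm_num
    ring_nf
  rw [h2]
  have h3 : b * (b ^ (p-1) * (b ^ (-p) * (1+u^2) ^ (-p/2))) =
      (b ^ (1:ℝ) * b ^ (p-1) * b ^ (-p)) * (1+u^2) ^ (-p/2) := by
    rw [Real.rpow_one]; ring
  rw [h3, ← Real.rpow_add hb, ← Real.rpow_add hb]
  norm_num

lemma norm_complex (E a b : ℝ) : ‖(E : ℂ) - (a + b * Complex.I)‖ = Real.sqrt ((E-a)^2 + b^2) := by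
  rw [Complex.norm_def, Complex.normSq_apply]
  have h1 : ((E : ℂ) - (a + b * Complex.I)).re = E - a := by simp
  have h2 : ((E : ℂ) - (a + b * Complex.I)).im = -b := by simp
  rw [h1, h2]; ring_nf

lemma norm_rpow (p : ℝ) (E a b : ℝ) :
    ‖(E : ℂ) - (a + b * Complex.I)‖ ^ (-p) = ((E-a)^2 + b^2) ^ (-p/2) := by
  rw [norm_complex, Real.sqrt_eq_rpow, ← Real.rpow_mul (by positivity)]
  ring_nf

lemma ker_bound {p : ℝ} (hp : 1 < p) {b : ℝ} (hb0 : 0 < b) (hb1 : b ≤ 1) {c d E a : ℝ}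
    (ha : a ∈ Set.Ioc c d) (hE : E ∉ Set.Icc (c-1) (d+1)) :
    b ^ (p-1) * ((E-a)^2 + b^2) ^ (-p/2) ≤ ((|c|+|d|+2) ^ p) * ((1 + E^2) ^ (-p/2)) := by
  set K : ℝ := |c| + |d| + 2 with hK
  have hKpos : 0 < K := by positivity
  have h1 : 1 ≤ |E - a| := by
    rcases not_and_or.1 ((Set.mem_Icc).not.1 hE) with h | h
    · have h' : E < c - 1 := by linarith [not_le.1 h]
      have : 1 ≤ a - E := by linarith [ha.1]
      calc (1:ℝ) ≤ a - E := this
        _ ≤ |a - E| := le_abs_self _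
        _ = |E - a| := abs_sub_comm _ _
    · have h' : d + 1 < E := not_le.1 h
      have : 1 ≤ E - a := by linarith [ha.2]
      exact this.trans (le_abs_self _)
  have hEapos : (0:ℝ) < |E - a| := by linarith
  have haa : |a| ≤ |c| + |d| := by
    rw [abs_le]
    constructor
    · linarith [ha.1, neg_abs_le c, abs_nonneg d]
    · linarith [ha.2, le_abs_self d, abs_nonneg c]
  have h2 : 1 + |E| ≤ K * |E - a| := by
    have hEa : |E| ≤ |E - a| + |a| := by
      calc |E| = |(E - a) + a| := by ring_nf
        _ ≤ |E - a| + |a| := abs_add_le _ _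
    have hmul : (|c|+|d|+1) * 1 ≤ (|c|+|d|+1) * |E - a| :=
      mul_le_mul_of_nonneg_left h1 (by positivity)
    have hKsplit : K * |E - a| = |E - a| + (|c|+|d|+1) * |E - a| := by rw [hK]; ring
    linarith
  -- step 1 : b^(p-1) ≤ 1
  have s1 : b ^ (p-1) ≤ 1 := Real.rpow_le_one hb0.le hb1 (by linarith)
  -- step 2 : ((E-a)^2+b^2)^(-p/2) ≤ ((E-a)^2)^(-p/2)
  have hsq : (0:ℝ) < (E-a)^2 := sq_abs (E-a) ▸ pow_pos hEapos 2
  have s2 : ((E-a)^2 + b^2) ^ (-p/2) ≤ ((E-a)^2) ^ (-p/2) := by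
    apply Real.rpow_le_rpow_of_nonpos hsq (by nlinarith) (by linarith)
  -- ((E-a)^2)^(-p/2) = |E-a|^(-p)
  have s3 : ((E-a)^2 : ℝ) ^ (-p/2 : ℝ) = |E - a| ^ (-p) := by
    rw [← sq_abs, ← Real.rpow_natCast |E - a| 2, ← Real.rpow_mul (abs_nonneg _)]
    congr 1
    ring
  -- main comparison
  have base : (1 + E^2) ^ ((1:ℝ)/2) ≤ K * |E - a| := by
    rw [← Real.sqrt_eq_rpow]
    have : Real.sqrt (1 + E^2) ≤ 1 + |E| := by
      rw [show (1:ℝ) + |E| = Real.sqrt ((1+|E|)^2) by rw [Real.sqrt_sq (by positivity)]]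
      apply Real.sqrt_le_sqrt
      nlinarith [abs_nonneg E, sq_abs E]
    linarith
  have hppos : (0:ℝ) < p := by linarith
  have pow_base : (1 + E^2) ^ (p/2 : ℝ) ≤ K ^ p * |E - a| ^ p := by
    have := Real.rpow_le_rpow (by positivity) base hppos.le
    rwa [← Real.rpow_mul (by positivity), one_div_mul_eq_div,
      Real.mul_rpow hKpos.le (abs_nonneg _)] at this
  have s4 : |E - a| ^ (-p) ≤ K ^ p * (1 + E^2) ^ (-p/2) := by
    have hX : (0:ℝ) < |E - a| ^ p := Real.rpow_pos_of_pos hEapos _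
    have hY : (0:ℝ) < (1 + E^2) ^ (p/2 : ℝ) := Real.rpow_pos_of_pos (by positivity) _
    have hKp : (0:ℝ) < K ^ p := Real.rpow_pos_of_pos hKpos _
    rw [Real.rpow_neg (abs_nonneg _), show (-p/2 : ℝ) = -(p/2) by ring,
      Real.rpow_neg (by positivity : (0:ℝ) ≤ 1 + E^2)]
    calc (|E - a| ^ p)⁻¹ = K ^ p * (K ^ p * |E - a| ^ p)⁻¹ := by
          field_simp
      _ ≤ K ^ p * ((1 + E^2) ^ (p/2 : ℝ))⁻¹ := by
          gcongr
  calc b ^ (p-1) * ((E-a)^2 + b^2) ^ (-p/2)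
      ≤ 1 * ((E-a)^2) ^ (-p/2) := by
        apply mul_le_mul s1 s2 (by positivity) zero_le_one
    _ = |E - a| ^ (-p) := by rw [one_mul, s3]
    _ ≤ K ^ p * (1 + E^2) ^ (-p/2) := s4

lemma ker_meas (p b E : ℝ) :
    Measurable fun a : ℝ => ENNReal.ofReal (b ^ (p-1) * ((E-a)^2 + b^2) ^ (-p/2)) := by
  fun_prop

lemma F_eq (p : ℝ) (c d : ℝ) {b : ℝ} (hb : 0 < b) (E : ℝ) :
    ∫⁻ a in Set.Ioc c d, ENNReal.ofReal (b ^ (p-1) * ((E-a)^2 + b^2) ^ (-p/2)) =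
    ∫⁻ u in Set.Ico ((E-d)/b) ((E-c)/b), Wf p u := by
  rw [← lintegral_indicator measurableSet_Ioc, ← lintegral_indicator measurableSet_Ico]
  set kf : ℝ → ℝ≥0∞ := fun a => ENNReal.ofReal (b ^ (p-1) * ((E-a)^2 + b^2) ^ (-p/2)) with hkf
  have hkfmeas : Measurable ((Set.Ioc c d).indicator kf) :=
    (ker_meas p b E).indicator measurableSet_Ioc
  rw [lintegral_change b hb E _ hkfmeas, ← lintegral_const_mul' _ _ ENNReal.ofReal_ne_top]
  apply lintegral_congr
  intro u
  by_cases h : E - b * u ∈ Set.Ioc c d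
  · have hmem : u ∈ Set.Ico ((E-d)/b) ((E-c)/b) := by
      constructor
      · rw [div_le_iff₀ hb]; have := h.2; linarith [mul_comm u b]
      · rw [lt_div_iff₀ hb]; have := h.1; linarith [mul_comm u b]
    rw [Set.indicator_of_mem h, Set.indicator_of_mem hmem, hkf]
    rw [← ENNReal.ofReal_mul hb.le, ker_subst b hb u E]
    rfl
  · have hmem : u ∉ Set.Ico ((E-d)/b) ((E-c)/b) := by
      intro hu
      apply h
      constructor
      · have := hu.2; rw [lt_div_iff₀ hb] at this; linarith [mul_comm u b]
      · have := hu.1; rw [div_le_iff₀ hb] at this; linarith [mul_comm u b]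
    rw [Set.indicator_of_notMem h, Set.indicator_of_notMem hmem, mul_zero]

lemma tendsto_Wf_full {p : ℝ} (hp : 1 < p) {lo hi : ℕ → ℝ}
    (hlo : Tendsto lo atTop atBot) (hhi : Tendsto hi atTop atTop) :
    Tendsto (fun n => ∫⁻ u in Set.Ico (lo n) (hi n), Wf p u) atTop (𝓝 (∫⁻ u, Wf p u)) := by
  simp_rw [← lintegral_indicator measurableSet_Ico]
  apply tendsto_lintegral_of_dominated_convergence (Wf p)
    (fun n => (Wf_meas p).indicator measurableSet_Ico)
    (fun n => Filter.Eventually.of_forall fun u => Set.indicator_le_self _ _ u)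
    (Wf_lintegral_lt_top hp).ne
  apply Filter.Eventually.of_forall
  intro u
  apply tendsto_const_nhds.congr'
  filter_upwards [hlo.eventually (eventually_lt_atBot u), hhi.eventually (eventually_gt_atTop u)]
    with n h1 h2
  rw [Set.indicator_of_mem (Set.mem_Ico.2 ⟨h1.le, h2⟩)]

lemma tendsto_Wf_zero_right {p : ℝ} (hp : 1 < p) {lo hi : ℕ → ℝ}
    (hlo : Tendsto lo atTop atTop) :
    Tendsto (fun n => ∫⁻ u in Set.Ico (lo n) (hi n), Wf p u) atTop (𝓝 0) := by
  simp_rw [← lintegral_indicator measurableSet_Ico]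
  have h0 : (0 : ℝ≥0∞) = ∫⁻ u : ℝ, (0 : ℝ≥0∞) := by simp
  rw [h0]
  apply tendsto_lintegral_of_dominated_convergence (Wf p)
    (fun n => (Wf_meas p).indicator measurableSet_Ico)
    (fun n => Filter.Eventually.of_forall fun u => Set.indicator_le_self _ _ u)
    (Wf_lintegral_lt_top hp).ne
  apply Filter.Eventually.of_forall
  intro u
  apply tendsto_const_nhds.congr'
  filter_upwards [hlo.eventually (eventually_gt_atTop u)] with n h1
  rw [Set.indicator_of_notMem (fun hmem => absurd hmem.1 (not_le.2 h1))]

lemma tendsto_Wf_zero_left {p : ℝ} (hp : 1 < p) {lo hi : ℕ → ℝ}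
    (hhi : Tendsto hi atTop atBot) :
    Tendsto (fun n => ∫⁻ u in Set.Ico (lo n) (hi n), Wf p u) atTop (𝓝 0) := by
  simp_rw [← lintegral_indicator measurableSet_Ico]
  have h0 : (0 : ℝ≥0∞) = ∫⁻ u : ℝ, (0 : ℝ≥0∞) := by simp
  rw [h0]
  apply tendsto_lintegral_of_dominated_convergence (Wf p)
    (fun n => (Wf_meas p).indicator measurableSet_Ico)
    (fun n => Filter.Eventually.of_forall fun u => Set.indicator_le_self _ _ u)
    (Wf_lintegral_lt_top hp).ne
  apply Filter.Eventually.of_forall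
  intro u
  apply tendsto_const_nhds.congr'
  filter_upwards [hhi.eventually (eventually_lt_atBot u)] with n h1
  rw [Set.indicator_of_notMem (fun hmem => absurd hmem.2 (not_lt.2 h1.le))]

noncomputable def bb (n : ℕ) : ℝ := 1 / (n + 1)

lemma bb_pos (n : ℕ) : 0 < bb n := by unfold bb; positivity

lemma bb_le_one (n : ℕ) : bb n ≤ 1 := by
  rw [bb, div_le_one (by positivity)]
  linarith [Nat.cast_nonneg (α := ℝ) n]

lemma div_bb_atTop {r : ℝ} (hr : 0 < r) :
    Tendsto (fun n : ℕ => r / bb n) atTop atTop := by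
  have h1 : (fun n : ℕ => r / bb n) = fun n : ℕ => r * ((n : ℝ) + 1) := by
    funext n; rw [bb, one_div, div_eq_mul_inv, inv_inv]
  rw [h1]
  have hbase : Tendsto (fun n : ℕ => (n : ℝ) + 1) atTop atTop :=
    tendsto_atTop_add_const_right atTop (1:ℝ) (tendsto_natCast_atTop_atTop (R := ℝ))
  exact hbase.const_mul_atTop hr

lemma div_bb_atBot {r : ℝ} (hr : r < 0) :
    Tendsto (fun n : ℕ => r / bb n) atTop atBot := by
  have h1 : (fun n : ℕ => r / bb n) = fun n : ℕ => r * ((n : ℝ) + 1) := by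
    funext n; rw [bb, one_div, div_eq_mul_inv, inv_inv]
  rw [h1]
  have hbase : Tendsto (fun n : ℕ => (n : ℝ) + 1) atTop atTop :=
    tendsto_atTop_add_const_right atTop (1:ℝ) (tendsto_natCast_atTop_atTop (R := ℝ))
  exact hbase.const_mul_atTop_of_neg hr

lemma kerp_meas (p b : ℝ) :
    Measurable fun q : ℝ × ℝ => ENNReal.ofReal (b ^ (p-1) * ((q.1 - q.2)^2 + b^2) ^ (-p/2)) := by
  fun_prop

lemma key {p : ℝ} (hp : 1 < p) (μ ν : Measure ℝ) [SigmaFinite μ] [SigmaFinite ν]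
    (hμ : ∀ s : Set ℝ, Bornology.IsBounded s → μ s < ⊤)
    (hν : ∀ s : Set ℝ, Bornology.IsBounded s → ν s < ⊤)
    (hfin : ∀ z : ℂ, z.im ≠ 0 →
      (∫⁻ E : ℝ, ENNReal.ofReal (‖(E : ℂ) - z‖ ^ (-p)) ∂μ) < ⊤)
    (heq : ∀ z : ℂ, z.im ≠ 0 →
      (∫⁻ E : ℝ, ENNReal.ofReal (‖(E : ℂ) - z‖ ^ (-p)) ∂μ) =
      (∫⁻ E : ℝ, ENNReal.ofReal (‖(E : ℂ) - z‖ ^ (-p)) ∂ν))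
    {c d : ℝ} (hcd : c < d) (hcμ : μ {c} = 0) (hcν : ν {c} = 0)
    (hdμ : μ {d} = 0) (hdν : ν {d} = 0) :
    μ (Set.Ioc c d) = ν (Set.Ioc c d) := by
  classical
  set cp : ℝ≥0∞ := ∫⁻ u, Wf p u with hcp
  set F : ℕ → ℝ → ℝ≥0∞ := fun n E =>
    ∫⁻ a in Set.Ioc c d,
      ENNReal.ofReal ((bb n) ^ (p-1) * ((E-a)^2 + (bb n)^2) ^ (-p/2)) with hF
  set L : ℝ → ℝ≥0∞ := (Set.Ioc c d).indicator (fun _ => cp) with hL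
  set K : ℝ := |c| + |d| + 2 with hK
  set bound : ℝ → ℝ≥0∞ := fun E =>
    (Set.Icc (c-1) (d+1)).indicator (fun _ => cp) E +
      ENNReal.ofReal ((d - c) * K ^ p * ((1 + E^2) ^ (-p/2))) with hbound
  have hFmeas : ∀ (n : ℕ), Measurable (F n) := by
    intro n
    apply Measurable.lintegral_prod_right' (f := fun q : ℝ × ℝ =>
      ENNReal.ofReal ((bb n) ^ (p-1) * ((q.1 - q.2)^2 + (bb n)^2) ^ (-p/2)))
    exact kerp_meas p (bb n)
  -- the transforms agree for each n
  have hswap : ∀ (m : Measure ℝ) [SigmaFinite m], ∀ n : ℕ,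
      ∫⁻ E, F n E ∂m = ∫⁻ a in Set.Ioc c d, ENNReal.ofReal ((bb n) ^ (p-1)) *
        ∫⁻ E : ℝ, ENNReal.ofReal (‖(E : ℂ) - (a + bb n * Complex.I)‖ ^ (-p)) ∂m := by
    intro m _ n
    rw [hF]
    rw [lintegral_lintegral_swap (kerp_meas p (bb n)).aemeasurable]
    apply lintegral_congr
    intro a
    have h1 : ∀ E : ℝ, ENNReal.ofReal ((bb n) ^ (p-1) * ((E-a)^2 + (bb n)^2) ^ (-p/2)) =
        ENNReal.ofReal ((bb n) ^ (p-1)) *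
          ENNReal.ofReal (‖(E : ℂ) - (a + bb n * Complex.I)‖ ^ (-p)) := by
      intro E
      rw [norm_rpow, ← ENNReal.ofReal_mul (Real.rpow_nonneg (bb_pos n).le _)]
    simp_rw [h1]
    rw [lintegral_const_mul' _ _ ENNReal.ofReal_ne_top]
  have hseq : ∀ n : ℕ, ∫⁻ E, F n E ∂μ = ∫⁻ E, F n E ∂ν := by
    intro n
    rw [hswap μ n, hswap ν n]
    apply lintegral_congr
    intro a
    rw [heq (a + bb n * Complex.I) (by simp [(bb_pos n).ne'])]
  -- the dominating function is integrable
  have hboundfin : ∀ (m : Measure ℝ), (∀ s : Set ℝ, Bornology.IsBounded s → m s < ⊤) →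
      (∫⁻ E : ℝ, ENNReal.ofReal (‖(E : ℂ) - ((0:ℝ) + (1:ℝ) * Complex.I)‖ ^ (-p)) ∂m) < ⊤ →
      ∫⁻ E, bound E ∂m ≠ ⊤ := by
    intro m hm htr
    have h1 : ∀ E : ℝ, ENNReal.ofReal (‖(E : ℂ) - ((0:ℝ) + (1:ℝ) * Complex.I)‖ ^ (-p)) =
        ENNReal.ofReal ((1 + E^2) ^ (-p/2)) := by
      intro E
      rw [norm_rpow]
      norm_num
      rw [add_comm (E^2) 1]
    rw [hbound]
    rw [lintegral_add_left (measurable_const.indicator measurableSet_Icc)]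
    apply ne_of_lt
    apply ENNReal.add_lt_top.2
    constructor
    · rw [lintegral_indicator measurableSet_Icc, setLIntegral_const]
      exact ENNReal.mul_lt_top (Wf_lintegral_lt_top hp) (hm _ (Metric.isBounded_Icc _ _))
    · have h2 : ∀ E : ℝ, ENNReal.ofReal ((d - c) * K ^ p * ((1 + E^2) ^ (-p/2))) =
          ENNReal.ofReal ((d - c) * K ^ p) * ENNReal.ofReal ((1 + E^2) ^ (-p/2)) := by
        intro E
        have hKnn : (0:ℝ) ≤ K ^ p := Real.rpow_nonneg (by rw [hK]; positivity) p
        rw [← ENNReal.ofReal_mul (by nlinarith)]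
      simp_rw [h2]
      rw [lintegral_const_mul' _ _ ENNReal.ofReal_ne_top]
      apply ENNReal.mul_lt_top ENNReal.ofReal_lt_top
      simp_rw [h1] at htr
      exact htr
  -- the uniform bound
  have hFle : ∀ n E, F n E ≤ bound E := by
    intro n E
    by_cases hE : E ∈ Set.Icc (c-1) (d+1)
    · have : F n E ≤ cp := by
        rw [hF]
        dsimp only
        rw [F_eq p c d (bb_pos n) E]
        exact setLIntegral_le_lintegral _ _
      refine le_trans this ?_
      rw [hbound]
      dsimp only
      rw [Set.indicator_of_mem hE]
      exact le_self_add
    · have h3 : F n E ≤ ENNReal.ofReal ((d - c) * (K ^ p * ((1 + E^2) ^ (-p/2)))) := by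
        rw [hF]
        dsimp only
        calc ∫⁻ a in Set.Ioc c d,
              ENNReal.ofReal ((bb n) ^ (p-1) * ((E-a)^2 + (bb n)^2) ^ (-p/2))
            ≤ ∫⁻ _ in Set.Ioc c d,
              ENNReal.ofReal (K ^ p * ((1 + E^2) ^ (-p/2))) := by
              apply setLIntegral_mono measurable_const
              intro a ha
              exact ENNReal.ofReal_le_ofReal
                (ker_bound hp (bb_pos n) (bb_le_one n) ha hE)
          _ = ENNReal.ofReal (K ^ p * ((1 + E^2) ^ (-p/2))) * ENNReal.ofReal (d - c) := by
              rw [setLIntegral_const, Real.volume_Ioc]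
          _ = ENNReal.ofReal ((d - c) * (K ^ p * ((1 + E^2) ^ (-p/2)))) := by
              have hKnn : (0:ℝ) ≤ K ^ p := Real.rpow_nonneg (by rw [hK]; positivity) p
              have h9 : (0:ℝ) ≤ (1 + E^2) ^ (-p/2) := Real.rpow_nonneg (by positivity) _
              rw [← ENNReal.ofReal_mul (by nlinarith), mul_comm]
      refine le_trans h3 ?_
      rw [hbound]
      dsimp only
      rw [mul_assoc]
      exact le_add_self
  -- almost-everywhere convergence
  have hae : ∀ (m : Measure ℝ), m {c} = 0 → m {d} = 0 →
      ∀ᵐ E ∂m, Tendsto (fun n => F n E) atTop (𝓝 (L E)) := by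
    intro m hcm hdm
    have hcd0 : m ({c} ∪ {d}) = 0 := measure_union_null hcm hdm
    rw [ae_iff]
    apply measure_mono_null _ hcd0
    intro E hE
    simp only [Set.mem_setOf_eq] at hE
    simp only [Set.mem_union, Set.mem_singleton_iff]
    by_contra hcon
    push_neg at hcon
    apply hE
    have hFeq : ∀ n, F n E = ∫⁻ u in Set.Ico ((E-d)/(bb n)) ((E-c)/(bb n)), Wf p u := by
      intro n
      rw [hF]
      dsimp only
      rw [F_eq p c d (bb_pos n) E]
    simp_rw [hFeq]
    rcases lt_trichotomy E c with h | h | h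
    · have hLE : L E = 0 := by
        rw [hL, Set.indicator_of_notMem]
        intro hmem
        exact absurd hmem.1 (not_lt.2 h.le)
      rw [hLE]
      exact tendsto_Wf_zero_left hp (div_bb_atBot (by linarith))
    · exact absurd h hcon.1
    · rcases lt_trichotomy E d with h2 | h2 | h2
      · have hLE : L E = cp := by
          rw [hL, Set.indicator_of_mem (Set.mem_Ioc.2 ⟨h, h2.le⟩)]
        rw [hLE, hcp]
        exact tendsto_Wf_full hp (div_bb_atBot (by linarith)) (div_bb_atTop (by linarith))
      · exact absurd h2 hcon.2
      · have hLE : L E = 0 := by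
          rw [hL, Set.indicator_of_notMem]
          intro hmem
          exact absurd hmem.2 (not_le.2 h2)
        rw [hLE]
        exact tendsto_Wf_zero_right hp (div_bb_atTop (by linarith))
  -- integral of the limit
  have hLint : ∀ (m : Measure ℝ), ∫⁻ E, L E ∂m = cp * m (Set.Ioc c d) := by
    intro m
    rw [hL, lintegral_indicator measurableSet_Ioc, setLIntegral_const]
  -- dominated convergence
  have hTμ : Tendsto (fun n => ∫⁻ E, F n E ∂μ) atTop (𝓝 (cp * μ (Set.Ioc c d))) := by
    rw [← hLint μ]
    exact tendsto_lintegral_of_dominated_convergence bound hFmeas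
      (fun n => Filter.Eventually.of_forall (hFle n))
      (hboundfin μ hμ (hfin _ (by simp))) (hae μ hcμ hdμ)
  have hTν : Tendsto (fun n => ∫⁻ E, F n E ∂ν) atTop (𝓝 (cp * ν (Set.Ioc c d))) := by
    rw [← hLint ν]
    refine tendsto_lintegral_of_dominated_convergence bound hFmeas
      (fun n => Filter.Eventually.of_forall (hFle n))
      (hboundfin ν hν ?_) (hae ν hcν hdν)
    rw [← heq _ (by simp)]
    exact hfin _ (by simp)
  have hlim : cp * μ (Set.Ioc c d) = cp * ν (Set.Ioc c d) := by
    apply tendsto_nhds_unique _ hTν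
    exact hTμ.congr hseq
  have hcp0 : cp ≠ 0 := (Wf_lintegral_pos p).ne'
  have hcptop : cp ≠ ⊤ := (Wf_lintegral_lt_top hp).ne
  apply le_antisymm
  · exact (ENNReal.mul_le_mul_iff_right hcp0 hcptop).1 hlim.le
  · exact (ENNReal.mul_le_mul_iff_right hcp0 hcptop).1 hlim.ge

lemma exists_seq (T : Set ℝ) (hT : T.Countable) (x : ℝ) :
    ∃ e : ℕ → ℝ, Antitone e ∧ (∀ n, e n ∉ T) ∧ (∀ n, x < e n) ∧
      Tendsto e atTop (𝓝 x) := by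
  have hd : Dense Tᶜ := hT.dense_compl ℝ
  have hpick : ∀ n : ℕ, ∃ y, y ∉ T ∧ y ∈ Set.Ioo x (x + 1/(n+1)) := by
    intro n
    have hne : (Set.Ioo x (x + 1/(n+1))).Nonempty := by
      apply Set.nonempty_Ioo.2
      have : (0:ℝ) < 1/(n+1) := by positivity
      linarith
    rcases hd.exists_mem_open isOpen_Ioo hne with ⟨y, hy1, hy2⟩
    exact ⟨y, hy1, hy2⟩
  choose t ht1 ht2 using hpick
  set e : ℕ → ℝ := fun n => Nat.rec (t 0) (fun k acc => min acc (t (k+1))) n with he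
  have hsucc : ∀ n, e (n+1) = min (e n) (t (n+1)) := fun n => rfl
  have hant : Antitone e := antitone_nat_of_succ_le fun n => by
    rw [hsucc]; exact min_le_left _ _
  have hmem : ∀ n, e n ∉ T ∧ x < e n := by
    intro n
    induction n with
    | zero => exact ⟨ht1 0, (ht2 0).1⟩
    | succ k ih =>
      rw [hsucc]
      rcases min_cases (e k) (t (k+1)) with ⟨hmin, _⟩ | ⟨hmin, _⟩
      · rw [hmin]; exact ih
      · rw [hmin]; exact ⟨ht1 (k+1), (ht2 (k+1)).1⟩
  have hub : ∀ n, e n < x + 1/(n+1) := by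
    intro n
    cases n with
    | zero => exact (ht2 0).2
    | succ k =>
      rw [hsucc]
      exact lt_of_le_of_lt (min_le_right _ _) (ht2 (k+1)).2
  refine ⟨e, hant, fun n => (hmem n).1, fun n => (hmem n).2, ?_⟩
  have hupper : Tendsto (fun n : ℕ => x + 1/((n:ℝ)+1)) atTop (𝓝 x) := by
    have := tendsto_one_div_add_atTop_nhds_zero_nat (𝕜 := ℝ)
    have h2 := (tendsto_const_nhds (x := x) (f := atTop (α := ℕ))).add this
    simpa using h2
  exact tendsto_of_tendsto_of_tendsto_of_le_of_le tendsto_const_nhds hupper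
    (fun n => (hmem n).2.le) (fun n => (hub n).le)

/-- Two positive Borel measures on ℝ whose integral transforms
`∫ |E - z|^(-p)` agree and are finite for every non-real `z` coincide. -/
theorem stmt1 (p : ℝ) (hp : 1 < p)
    (μ ν : Measure ℝ)
    (hμ : ∀ s : Set ℝ, Bornology.IsBounded s → μ s < ⊤)
    (hν : ∀ s : Set ℝ, Bornology.IsBounded s → ν s < ⊤)
    (hfin : ∀ z : ℂ, z.im ≠ 0 →
      (∫⁻ E : ℝ, ENNReal.ofReal (‖(E : ℂ) - z‖ ^ (-p)) ∂μ) < ⊤)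
    (heq : ∀ z : ℂ, z.im ≠ 0 →
      (∫⁻ E : ℝ, ENNReal.ofReal (‖(E : ℂ) - z‖ ^ (-p)) ∂μ) =
      (∫⁻ E : ℝ, ENNReal.ofReal (‖(E : ℂ) - z‖ ^ (-p)) ∂ν)) :
    μ = ν := by
  classical
  haveI hlocμ : IsLocallyFiniteMeasure μ :=
    ⟨fun x => ⟨Metric.ball x 1, Metric.ball_mem_nhds x one_pos,
      hμ _ Metric.isBounded_ball⟩⟩
  haveI hlocν : IsLocallyFiniteMeasure ν :=
    ⟨fun x => ⟨Metric.ball x 1, Metric.ball_mem_nhds x one_pos,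
      hν _ Metric.isBounded_ball⟩⟩
  -- countable set of atoms
  have hTcμ : Set.Countable {x : ℝ | 0 < μ {x}} := by
    apply MeasureTheory.Measure.countable_meas_pos_of_disjoint_iUnion
      (As := fun x : ℝ => ({x} : Set ℝ)) (fun x => measurableSet_singleton x)
    intro x y hxy
    exact Set.disjoint_singleton.2 hxy
  have hTcν : Set.Countable {x : ℝ | 0 < ν {x}} := by
    apply MeasureTheory.Measure.countable_meas_pos_of_disjoint_iUnion
      (As := fun x : ℝ => ({x} : Set ℝ)) (fun x => measurableSet_singleton x)
    intro x y hxy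
    exact Set.disjoint_singleton.2 hxy
  set T : Set ℝ := {x : ℝ | 0 < μ {x}} ∪ {x : ℝ | 0 < ν {x}} with hT
  have hTc : T.Countable := hTcμ.union hTcν
  have hTgood : ∀ x ∉ T, μ {x} = 0 ∧ ν {x} = 0 := by
    intro x hx
    rw [hT, Set.mem_union] at hx
    push_neg at hx
    constructor
    · exact le_zero_iff.1 (not_lt.1 (fun h => hx.1 h))
    · exact le_zero_iff.1 (not_lt.1 (fun h => hx.2 h))
  have key' : ∀ c d : ℝ, c ∉ T → d ∉ T → μ (Set.Ioc c d) = ν (Set.Ioc c d) := by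
    intro c d hc hd
    rcases lt_or_ge c d with h | h
    · exact key hp μ ν hμ hν hfin heq h (hTgood c hc).1 (hTgood c hc).2
        (hTgood d hd).1 (hTgood d hd).2
    · rw [Set.Ioc_eq_empty (not_lt.2 h)]
      simp
  have h1 : ∀ c : ℝ, c ∉ T → ∀ b : ℝ, μ (Set.Ioc c b) = ν (Set.Ioc c b) := by
    intro c hc b
    obtain ⟨e, hant, heT, hgt, hlim⟩ := exists_seq T hTc b
    have hset : Set.Ioc c b = ⋂ n, Set.Ioc c (e n) := by
      ext x
      simp only [Set.mem_Ioc, Set.mem_iInter]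
      constructor
      · rintro ⟨h1x, h2x⟩ n
        exact ⟨h1x, h2x.trans (hgt n).le⟩
      · intro h
        exact ⟨(h 0).1, ge_of_tendsto' hlim fun n => (h n).2⟩
    have hAnt : Antitone fun n => Set.Ioc c (e n) :=
      fun m n hmn => Set.Ioc_subset_Ioc_right (hant hmn)
    have hμt : Tendsto (fun n => μ (Set.Ioc c (e n))) atTop (𝓝 (μ (Set.Ioc c b))) := by
      rw [hset]
      exact tendsto_measure_iInter_atTop
        (fun n => measurableSet_Ioc.nullMeasurableSet) hAnt
        ⟨0, (hμ _ (Metric.isBounded_Ioc _ _)).ne⟩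
    have hνt : Tendsto (fun n => ν (Set.Ioc c (e n))) atTop (𝓝 (ν (Set.Ioc c b))) := by
      rw [hset]
      exact tendsto_measure_iInter_atTop
        (fun n => measurableSet_Ioc.nullMeasurableSet) hAnt
        ⟨0, (hν _ (Metric.isBounded_Ioc _ _)).ne⟩
    exact tendsto_nhds_unique (hμt.congr fun n => key' c (e n) hc (heT n)) hνt
  have h2 : ∀ a b : ℝ, μ (Set.Ioc a b) = ν (Set.Ioc a b) := by
    intro a b
    obtain ⟨e, hant, heT, hgt, hlim⟩ := exists_seq T hTc a
    have hset : Set.Ioc a b = ⋃ n, Set.Ioc (e n) b := by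
      ext x
      simp only [Set.mem_Ioc, Set.mem_iUnion]
      constructor
      · rintro ⟨h1x, h2x⟩
        obtain ⟨n, hn⟩ := (hlim.eventually_lt_const h1x).exists
        exact ⟨n, hn, h2x⟩
      · rintro ⟨n, hn1, hn2⟩
        exact ⟨(hgt n).trans hn1, hn2⟩
    have hMon : Monotone fun n => Set.Ioc (e n) b :=
      fun m n hmn => Set.Ioc_subset_Ioc_left (hant hmn)
    have hμt : Tendsto (fun n => μ (Set.Ioc (e n) b)) atTop (𝓝 (μ (Set.Ioc a b))) := by
      rw [hset]
      exact tendsto_measure_iUnion_atTop hMon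
    have hνt : Tendsto (fun n => ν (Set.Ioc (e n) b)) atTop (𝓝 (ν (Set.Ioc a b))) := by
      rw [hset]
      exact tendsto_measure_iUnion_atTop hMon
    exact tendsto_nhds_unique (hμt.congr fun n => h1 (e n) (heT n) b) hνt
  exact MeasureTheory.Measure.ext_of_Ioc μ ν fun a b _ => h2 a b
end

section
/- Let μ and μ_n (n ∈ ℕ) be positive Borel measures on ℝ. Assume that μ_n converges vaguely to μ as n → ∞, i.e. for every continuous function f : ℝ → ℝ with compact support lim_{n→∞} ∫_ℝ f dμ_n = ∫_ℝ f dμ, and that the sequence is tight near minus infinity, i.e. lim_{E → −∞} limsup_{n→∞} μ_n((−∞, E)) = 0. Then μ((−∞, E)) < ∞ for all E ∈ ℝ, and lim_{n→∞} μ_n((−∞, E)) = μ((−∞, E)) for all E ∈ ℝ with μ({E}) = 0. -/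
open MeasureTheory Filter Topology Set
open scoped ENNReal NNReal

lemma myBump (a b c d : ℝ) (hab : a < b) (hbc : b ≤ c) (hcd : c < d) :
    ∃ f : ℝ → ℝ, Continuous f ∧ HasCompactSupport f ∧ (∀ x, 0 ≤ f x) ∧ (∀ x, f x ≤ 1) ∧
      (∀ x ∈ Icc b c, f x = 1) ∧ (∀ x, x ∉ Ioo a d → f x = 0) := by
  set f : ℝ → ℝ := fun x => max 0 (min 1 (min ((x - a)/(b - a)) ((d - x)/(d - c)))) with hf
  have hba : (0:ℝ) < b - a := by linarith
  have hdc : (0:ℝ) < d - c := by linarith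
  have hcont : Continuous f := by
    apply continuous_const.max
    apply continuous_const.min
    exact ((continuous_id.sub continuous_const).div_const _).min
      ((continuous_const.sub continuous_id).div_const _)
  have hzero : ∀ x, x ∉ Ioo a d → f x = 0 := by
    intro x hx
    rw [Set.mem_Ioo, not_and_or, not_lt, not_lt] at hx
    have : min ((x - a)/(b - a)) ((d - x)/(d - c)) ≤ 0 := by
      rcases hx with h | h
      · exact le_trans (min_le_left _ _) (div_nonpos_iff.2 (Or.inr ⟨by linarith, hba.le⟩))
      · exact le_trans (min_le_right _ _) (div_nonpos_iff.2 (Or.inr ⟨by linarith, hdc.le⟩))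
    have : min 1 (min ((x - a)/(b - a)) ((d - x)/(d - c))) ≤ 0 :=
      le_trans (min_le_right _ _) this
    simpa [hf] using max_eq_left this
  refine ⟨f, hcont, ?_, fun x => le_max_left _ _,
    fun x => max_le (by norm_num) (min_le_left _ _), ?_, hzero⟩
  · apply HasCompactSupport.intro (isCompact_Icc (a := a) (b := d))
    intro x hx
    apply hzero
    intro h; exact hx ⟨h.1.le, h.2.le⟩
  · intro x hx
    have h1 : (1:ℝ) ≤ (x - a)/(b - a) := (one_le_div hba).2 (by linarith [hx.1])
    have h2 : (1:ℝ) ≤ (d - x)/(d - c) := (one_le_div hdc).2 (by linarith [hx.2])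
    have : min 1 (min ((x - a)/(b - a)) ((d - x)/(d - c))) = 1 :=
      min_eq_left (le_min h1 h2)
    simp [hf, this]

lemma meas_le_ofReal (ν : Measure ℝ) [IsFiniteMeasureOnCompacts ν] {f : ℝ → ℝ}
    (hc : Continuous f) (hcs : HasCompactSupport f) (h0 : ∀ x, 0 ≤ f x)
    {s : Set ℝ} (hsm : MeasurableSet s) (hs : ∀ x ∈ s, f x = 1) :
    ν s ≤ ENNReal.ofReal (∫ x, f x ∂ν) := by
  have hint : Integrable f ν := hc.integrable_of_hasCompactSupport hcs
  rw [MeasureTheory.ofReal_integral_eq_lintegral_ofReal hint (Eventually.of_forall h0),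
    ← lintegral_indicator_one hsm]
  apply lintegral_mono
  intro x
  by_cases hx : x ∈ s
  · simp [Set.indicator_of_mem hx, hs x hx]
  · simp [Set.indicator_of_notMem hx]

lemma ofReal_le_meas (ν : Measure ℝ) [IsFiniteMeasureOnCompacts ν] {f : ℝ → ℝ}
    (hc : Continuous f) (hcs : HasCompactSupport f) (h0 : ∀ x, 0 ≤ f x) (h1 : ∀ x, f x ≤ 1)
    {s : Set ℝ} (hsm : MeasurableSet s) (hs : ∀ x, x ∉ s → f x = 0) :
    ENNReal.ofReal (∫ x, f x ∂ν) ≤ ν s := by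
  have hint : Integrable f ν := hc.integrable_of_hasCompactSupport hcs
  rw [MeasureTheory.ofReal_integral_eq_lintegral_ofReal hint (Eventually.of_forall h0),
    ← lintegral_indicator_one hsm]
  apply lintegral_mono
  intro x
  by_cases hx : x ∈ s
  · simpa [Set.indicator_of_mem hx] using ENNReal.ofReal_le_one.2 (h1 x)
  · simp [Set.indicator_of_notMem hx, hs x hx]

/-- Vague convergence together with tightness near minus infinity implies
finiteness of the limiting distribution function and pointwise convergence of the
distribution functions at all continuity points. -/
theorem stmt3 (μ : Measure ℝ) (μs : ℕ → Measure ℝ)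
    (hμ : ∀ s : Set ℝ, Bornology.IsBounded s → μ s < ⊤)
    (hμs : ∀ n, ∀ s : Set ℝ, Bornology.IsBounded s → μs n s < ⊤)
    (hvague : ∀ f : ℝ → ℝ, Continuous f → HasCompactSupport f →
      Tendsto (fun n => ∫ x, f x ∂(μs n)) atTop (𝓝 (∫ x, f x ∂μ)))
    (htight : Tendsto (fun E : ℝ => Filter.limsup (fun n => μs n (Set.Iio E)) atTop)
      atBot (𝓝 0)) :
    (∀ E : ℝ, μ (Set.Iio E) < ⊤) ∧
    (∀ E : ℝ, μ {E} = 0 →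
      Tendsto (fun n => μs n (Set.Iio E)) atTop (𝓝 (μ (Set.Iio E)))) := by
  haveI : IsFiniteMeasureOnCompacts μ := ⟨fun _ hK => hμ _ hK.isBounded⟩
  have hμsI : ∀ n, IsFiniteMeasureOnCompacts (μs n) :=
    fun n => ⟨fun _ hK => hμs n _ hK.isBounded⟩
  -- Lower bound: μ (Iio E) ≤ liminf
  have lowb : ∀ E : ℝ, μ (Set.Iio E) ≤ liminf (fun n => μs n (Set.Iio E)) atTop := by
    intro E
    set s : ℕ → Set ℝ := fun k => Ioo (E - (k+1)) (E - 1/(k+1)) with hsdef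
    have hmono : Monotone s := by
      intro i j hij
      apply Ioo_subset_Ioo
      · have : (i:ℝ) ≤ j := Nat.cast_le.2 hij; linarith
      · have h1 : (1:ℝ)/(j+1) ≤ 1/(i+1) := by
          apply one_div_le_one_div_of_le (by positivity)
          have : (i:ℝ) ≤ j := Nat.cast_le.2 hij; linarith
        linarith
    have hU : ⋃ k, s k = Iio E := by
      ext x
      simp only [hsdef, mem_iUnion, mem_Ioo, mem_Iio]
      constructor
      · rintro ⟨k, _, h2⟩
        have : (0:ℝ) < 1/(k+1) := by positivity
        linarith
      · intro hx
        obtain ⟨k1, hk1⟩ := exists_nat_one_div_lt (sub_pos.2 hx)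
        obtain ⟨k2, hk2⟩ := exists_nat_gt (E - x)
        refine ⟨max k1 k2, ?_, ?_⟩
        · have : (k2:ℝ) ≤ max k1 k2 := Nat.cast_le.2 (le_max_right _ _); linarith
        · have h1 : (1:ℝ)/(max k1 k2 + 1) ≤ 1/(k1+1) := by
            apply one_div_le_one_div_of_le (by positivity)
            have : (k1:ℝ) ≤ max k1 k2 := Nat.cast_le.2 (le_max_left _ _); linarith
          linarith
    have htend := tendsto_measure_iUnion_atTop (μ := μ) hmono
    rw [hU] at htend
    apply le_of_tendsto htend
    apply Eventually.of_forall
    intro k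
    have hpos : (0:ℝ) < 1/(k+1) := by positivity
    have hone : (1:ℝ)/(k+1) ≤ 1 := by
      rw [div_le_one (by positivity)]; have : (0:ℝ) ≤ k := Nat.cast_nonneg k; linarith
    obtain ⟨f, fc, fcs, f0, f1, fone, fz⟩ := myBump (E - (k+2)) (E - (k+1)) (E - 1/(k+1)) E
      (by push_cast; linarith) (by have : (0:ℝ) ≤ k := Nat.cast_nonneg k; linarith)
      (by linarith)
    have hlim : Tendsto (fun n => ENNReal.ofReal (∫ x, f x ∂(μs n))) atTop
        (𝓝 (ENNReal.ofReal (∫ x, f x ∂μ))) :=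
      (ENNReal.continuous_ofReal.tendsto _).comp (hvague f fc fcs)
    have hstep : ENNReal.ofReal (∫ x, f x ∂μ) ≤ liminf (fun n => μs n (Set.Iio E)) atTop := by
      rw [← hlim.liminf_eq]
      refine liminf_le_liminf (Eventually.of_forall fun n => ?_)
      haveI := hμsI n
      exact ofReal_le_meas (μs n) fc fcs f0 f1 measurableSet_Iio
        (fun x hx => fz x (fun hmem => hx hmem.2))
    calc (μ ∘ s) k ≤ μ (Icc (E-(k+1)) (E-1/(k+1))) := measure_mono Ioo_subset_Icc_self
      _ ≤ ENNReal.ofReal (∫ x, f x ∂μ) := meas_le_ofReal μ fc fcs f0 measurableSet_Icc fone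
      _ ≤ _ := hstep
  -- limsup finiteness
  have finL : ∀ E : ℝ, limsup (fun n => μs n (Set.Iio E)) atTop < ⊤ := by
    intro E
    have h1 : ∀ᶠ A in atBot, limsup (fun n => μs n (Set.Iio A)) atTop < 1 :=
      htight.eventually_lt_const (by norm_num)
    obtain ⟨A, hA1, hAE⟩ := (h1.and (eventually_le_atBot (E - 1))).exists
    obtain ⟨g, gc, gcs, g0, g1, gone, gz⟩ := myBump (A - 1) A E (E + 1)
      (by linarith) (by linarith) (by linarith)
    have hevA : ∀ᶠ n in atTop, μs n (Set.Iio A) < 1 := eventually_lt_of_limsup_lt hA1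
    have hlim : Tendsto (fun n => ENNReal.ofReal (∫ x, g x ∂(μs n))) atTop
        (𝓝 (ENNReal.ofReal (∫ x, g x ∂μ))) :=
      (ENNReal.continuous_ofReal.tendsto _).comp (hvague g gc gcs)
    have hevG : ∀ᶠ n in atTop, ENNReal.ofReal (∫ x, g x ∂(μs n)) <
        ENNReal.ofReal (∫ x, g x ∂μ) + 1 :=
      hlim.eventually_lt_const (ENNReal.lt_add_right ENNReal.ofReal_ne_top one_ne_zero)
    have hbound : ∀ᶠ n in atTop, μs n (Set.Iio E) ≤ ENNReal.ofReal (∫ x, g x ∂μ) + 2 := by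
      filter_upwards [hevA, hevG] with n hn1 hn2
      haveI := hμsI n
      have hsplit : μs n (Set.Iio E) ≤ μs n (Set.Iio A) + μs n (Set.Ico A E) := by
        rw [← Set.Iio_union_Ico_eq_Iio (by linarith : A ≤ E)]
        exact measure_union_le _ _
      have h2 : μs n (Set.Ico A E) ≤ ENNReal.ofReal (∫ x, g x ∂(μs n)) :=
        le_trans (measure_mono Ico_subset_Icc_self)
          (meas_le_ofReal (μs n) gc gcs g0 measurableSet_Icc gone)
      calc μs n (Set.Iio E) ≤ μs n (Set.Iio A) + μs n (Set.Ico A E) := hsplit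
        _ ≤ 1 + (ENNReal.ofReal (∫ x, g x ∂μ) + 1) := add_le_add hn1.le (h2.trans hn2.le)
        _ = ENNReal.ofReal (∫ x, g x ∂μ) + 2 := by ring
    calc limsup (fun n => μs n (Set.Iio E)) atTop ≤ ENNReal.ofReal (∫ x, g x ∂μ) + 2 :=
        limsup_le_of_le (by isBoundedDefault) hbound
      _ < ⊤ := ENNReal.add_lt_top.2 ⟨ENNReal.ofReal_lt_top, by norm_num⟩
  have part1 : ∀ E : ℝ, μ (Set.Iio E) < ⊤ := fun E =>
    lt_of_le_of_lt ((lowb E).trans liminf_le_limsup) (finL E)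
  refine ⟨part1, fun E hE => ?_⟩
  have hIic : μ (Set.Iic E) = μ (Set.Iio E) := by
    apply le_antisymm
    · calc μ (Set.Iic E) = μ (Set.Iio E ∪ {E}) := by rw [Set.Iio_union_right]
        _ ≤ μ (Set.Iio E) + μ {E} := measure_union_le _ _
        _ = μ (Set.Iio E) := by rw [hE, add_zero]
    · exact measure_mono Iio_subset_Iic_self
  have upb : limsup (fun n => μs n (Set.Iio E)) atTop ≤ μ (Set.Iio E) := by
    apply ENNReal.le_of_forall_pos_le_add
    intro ε hε _
    set c : ℝ≥0∞ := (ε : ℝ≥0∞) / 3 with hcdef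
    have hc0 : c ≠ 0 := by
      rw [hcdef]
      exact ENNReal.div_ne_zero.2 ⟨ENNReal.coe_ne_zero.2 hε.ne', by norm_num⟩
    have hcpos : (0:ℝ≥0∞) < c := pos_iff_ne_zero.2 hc0
    have h1 : ∀ᶠ A in atBot, limsup (fun n => μs n (Set.Iio A)) atTop < c :=
      htight.eventually_lt_const hcpos
    obtain ⟨A, hA1, hAE⟩ := (h1.and (eventually_le_atBot (E - 1))).exists
    -- continuity from above
    have hanti : Antitone (fun k : ℕ => Set.Iio (E + 1/(k+1))) := by
      intro i j hij
      apply Iio_subset_Iio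
      have h1 : (1:ℝ)/(j+1) ≤ 1/(i+1) := by
        apply one_div_le_one_div_of_le (by positivity)
        have : (i:ℝ) ≤ j := Nat.cast_le.2 hij; linarith
      linarith
    have hInt : ⋂ k : ℕ, Set.Iio (E + 1/(k+1)) = Set.Iic E := by
      ext x
      simp only [mem_iInter, mem_Iio, mem_Iic]
      constructor
      · intro h
        by_contra hx
        push_neg at hx
        obtain ⟨k, hk⟩ := exists_nat_one_div_lt (sub_pos.2 hx)
        exact absurd (h k) (by push_neg; linarith)
      · intro h k
        have : (0:ℝ) < 1/(k+1) := by positivity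
        linarith
    have htendI := tendsto_measure_iInter_atTop (μ := μ)
      (fun k => measurableSet_Iio.nullMeasurableSet) hanti ⟨0, (part1 _).ne⟩
    rw [hInt, hIic] at htendI
    have hIdelta : ∀ᶠ k : ℕ in atTop, μ (Set.Iio (E + 1/(k+1))) < μ (Set.Iio E) + c :=
      htendI.eventually_lt_const (ENNReal.lt_add_right (part1 E).ne hc0)
    obtain ⟨k0, hk0⟩ := hIdelta.exists
    set δ : ℝ := 1/(k0+1) with hδdef
    have hδ0 : (0:ℝ) < δ := by positivity
    obtain ⟨g, gc, gcs, g0, g1, gone, gz⟩ := myBump (A - 1) A E (E + δ)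
      (by linarith) (by linarith) (by linarith)
    have hlim : Tendsto (fun n => ENNReal.ofReal (∫ x, g x ∂(μs n))) atTop
        (𝓝 (ENNReal.ofReal (∫ x, g x ∂μ))) :=
      (ENNReal.continuous_ofReal.tendsto _).comp (hvague g gc gcs)
    have hgμ : ENNReal.ofReal (∫ x, g x ∂μ) ≤ μ (Set.Iio (E + δ)) :=
      ofReal_le_meas μ gc gcs g0 g1 measurableSet_Iio (fun x hx => gz x (fun hm => hx hm.2))
    have hevA : ∀ᶠ n in atTop, μs n (Set.Iio A) < c := eventually_lt_of_limsup_lt hA1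
    have hevG : ∀ᶠ n in atTop, ENNReal.ofReal (∫ x, g x ∂(μs n)) <
        ENNReal.ofReal (∫ x, g x ∂μ) + c :=
      hlim.eventually_lt_const (ENNReal.lt_add_right ENNReal.ofReal_ne_top hc0)
    have hbound : ∀ᶠ n in atTop, μs n (Set.Iio E) ≤ μ (Set.Iio E) + ε := by
      filter_upwards [hevA, hevG] with n hn1 hn2
      haveI := hμsI n
      have hsplit : μs n (Set.Iio E) ≤ μs n (Set.Iio A) + μs n (Set.Ico A E) := by
        rw [← Set.Iio_union_Ico_eq_Iio (by linarith : A ≤ E)]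
        exact measure_union_le _ _
      have h2 : μs n (Set.Ico A E) ≤ ENNReal.ofReal (∫ x, g x ∂(μs n)) :=
        le_trans (measure_mono Ico_subset_Icc_self)
          (meas_le_ofReal (μs n) gc gcs g0 measurableSet_Icc gone)
      calc μs n (Set.Iio E) ≤ μs n (Set.Iio A) + μs n (Set.Ico A E) := hsplit
        _ ≤ c + (ENNReal.ofReal (∫ x, g x ∂μ) + c) := add_le_add hn1.le (h2.trans hn2.le)
        _ ≤ c + ((μ (Set.Iio E) + c) + c) := by
            gcongr
            exact hgμ.trans hk0.le
        _ = μ (Set.Iio E) + (c + c + c) := by ring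
        _ = μ (Set.Iio E) + ε := by rw [hcdef, ENNReal.add_thirds]
    exact limsup_le_of_le (by isBoundedDefault) hbound
  exact tendsto_of_le_liminf_of_limsup_le (lowb E) upb
end

section
/- Let d ∈ ℕ, let α ∈ ℝ with α > d/2, let L ≥ 1 and m ≥ 1. Then Σ_{n ∈ ℕ₀^d} ( π² |n|² / (2 L²) + m )^{−α} ≤ L^d · m^{d/2 − α} · (1/Γ(α)) · ∫_0^∞ e^{−ξ} ξ^{α−1} ( 1 + (2π ξ)^{−1/2} )^d dξ, and the integral on the right-hand side is finite. (This is the bound on Tr (H_{Λ,N}(0,0) − E₁)^{−α}, with E₁ = −m ≤ −1, for the Neumann Laplacian H_{Λ,N}(0,0) = −Δ/2 on a cube of edge length L, expressed through its explicitly known spectrum {π²|n|²/(2L²) : n ∈ ℕ₀^d}.) -/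
open Real MeasureTheory Set

lemma aux_tsum_pi (g : ℕ → ENNReal) : ∀ d : ℕ,
    ∑' n : Fin d → ℕ, ∏ i, g (n i) = (∑' k, g k) ^ d := by
  intro d
  induction d with
  | zero =>
    rw [tsum_eq_single (fun i => i.elim0) (fun b hb => absurd (Subsingleton.elim b _) hb)]
    simp
  | succ d ih =>
    rw [← (Fin.consEquiv (fun _ : Fin (d+1) => ℕ)).tsum_eq (fun n => ∏ i, g (n i))]
    have : ∀ p : ℕ × (Fin d → ℕ),
        (∏ i, g ((Fin.consEquiv (fun _ : Fin (d+1) => ℕ)) p i)) = g p.1 * ∏ i, g (p.2 i) := by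
      intro p
      simp [Fin.consEquiv, Fin.prod_univ_succ]
    rw [tsum_congr this, ENNReal.tsum_prod']
    simp_rw [ENNReal.tsum_mul_left]
    rw [ENNReal.tsum_mul_right, ih, pow_succ, mul_comm]

lemma aux_summable {b : ℝ} (hb : 0 < b) :
    Summable (fun k : ℕ => Real.exp (-b * (k : ℝ) ^ 2)) := by
  refine Summable.of_nonneg_of_le (fun k => (exp_pos _).le) (fun k => ?_)
    (summable_geometric_of_lt_one (exp_pos (-b)).le (exp_lt_one_iff.2 (by linarith)))
  rw [← Real.exp_nat_mul]
  apply Real.exp_le_exp.2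
  have : (k : ℝ) ≤ (k : ℝ) ^ 2 := by
    have := Nat.le_self_pow (two_ne_zero) k
    exact_mod_cast this
  nlinarith

lemma aux_sum_le {b : ℝ} (hb : 0 < b) :
    ∑' k : ℕ, Real.exp (-b * (k : ℝ) ^ 2) ≤ 1 + Real.sqrt (π / b) / 2 := by
  rw [Summable.tsum_eq_zero_add (aux_summable hb)]
  simp only [Nat.cast_zero, ne_eq, OfNat.ofNat_ne_zero, not_false_eq_true, zero_pow, mul_zero,
    Real.exp_zero]
  gcongr
  refine Real.tsum_le_of_sum_range_le (fun k => (exp_pos _).le) (fun N => ?_)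
  push_cast
  have hint : ∀ k : ℕ, IntervalIntegrable (fun x : ℝ => Real.exp (-b * x ^ 2)) volume
      ((k : ℝ)) ((k : ℝ) + 1) :=
    fun k => (integrable_exp_neg_mul_sq hb).intervalIntegrable
  have step : ∀ k : ℕ, Real.exp (-b * ((k : ℝ) + 1) ^ 2)
      ≤ ∫ x in (k : ℝ)..((k : ℝ) + 1), Real.exp (-b * x ^ 2) := by
    intro k
    rw [intervalIntegral.integral_of_le (by linarith)]
    have := setIntegral_ge_of_const_le (μ := volume) (f := fun x => Real.exp (-b * x ^ 2))
      (s := Ioc (k : ℝ) ((k : ℝ) + 1)) (c := Real.exp (-b * ((k : ℝ) + 1) ^ 2)) measurableSet_Ioc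
      (by simp) ?_ ((integrable_exp_neg_mul_sq hb).integrableOn)
    · simpa using this
    · intro x hx
      apply Real.exp_le_exp.2
      have hx0 : 0 ≤ x := le_trans (Nat.cast_nonneg k) hx.1.le
      have hx2 : x ^ 2 ≤ ((k:ℝ) + 1) ^ 2 := by nlinarith [hx.2]
      nlinarith [mul_le_mul_of_nonneg_left hx2 hb.le]
  calc ∑ k ∈ Finset.range N, Real.exp (-b * ((k : ℝ) + 1) ^ 2)
      ≤ ∑ k ∈ Finset.range N, ∫ x in (k : ℝ)..((k : ℝ) + 1), Real.exp (-b * x ^ 2) :=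
        Finset.sum_le_sum fun k _ => step k
    _ = ∫ x in (0 : ℝ)..(N : ℝ), Real.exp (-b * x ^ 2) := by
        have := intervalIntegral.sum_integral_adjacent_intervals
          (a := fun k : ℕ => (k : ℝ)) (f := fun x => Real.exp (-b * x ^ 2))
          (μ := volume) (n := N) (fun k _ => by push_cast; exact hint k)
        push_cast at this ⊢
        rw [← this]
    _ ≤ ∫ x in Ioi (0 : ℝ), Real.exp (-b * x ^ 2) := by
        rw [intervalIntegral.integral_of_le (Nat.cast_nonneg N)]
        apply setIntegral_mono_set ((integrable_exp_neg_mul_sq hb).integrableOn)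
        · filter_upwards with x using (exp_pos _).le
        · filter_upwards with x hx using hx.1
    _ = Real.sqrt (π / b) / 2 := integral_gaussian_Ioi b

lemma aux_gamma {r a : ℝ} (hr : 0 < r) (ha : 0 < a) :
    ∫⁻ ξ in Ioi (0:ℝ), ENNReal.ofReal (ξ ^ (a - 1) * Real.exp (-(r * ξ)))
      = ENNReal.ofReal ((1 / r) ^ a * Real.Gamma a) := by
  have hid := integral_rpow_mul_exp_neg_mul_Ioi ha hr
  have hpos : 0 < (1 / r) ^ a * Real.Gamma a := by positivity
  have hInt : IntegrableOn (fun ξ : ℝ => ξ ^ (a - 1) * Real.exp (-(r * ξ))) (Ioi 0) := by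
    by_contra h
    rw [MeasureTheory.integral_undef h] at hid
    exact absurd hid.symm (ne_of_gt hpos)
  rw [← ofReal_integral_eq_lintegral_ofReal hInt ?_, hid]
  filter_upwards [self_mem_ae_restrict measurableSet_Ioi] with x hx
  have : (0:ℝ) < x := hx
  positivity

lemma aux_integrable (d : ℕ) {α : ℝ} (hα : (d : ℝ) / 2 < α) :
    IntegrableOn
      (fun ξ : ℝ => Real.exp (-ξ) * ξ ^ (α - 1) * (1 + (2 * π * ξ) ^ (-(1/2) : ℝ)) ^ d)
      (Set.Ioi 0) := by
  have hα0 : 0 < α := lt_of_le_of_lt (by positivity) hα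
  have hαd : 0 < α - (d : ℝ) / 2 := by linarith
  have h1 : IntegrableOn (fun x : ℝ => Real.exp (-x) * x ^ (α - 1)) (Ioi 0) :=
    Real.GammaIntegral_convergent hα0
  have h2 : IntegrableOn (fun x : ℝ => Real.exp (-x) * x ^ (α - (d : ℝ) / 2 - 1)) (Ioi 0) := by
    have := Real.GammaIntegral_convergent hαd
    simpa using this
  refine Integrable.mono' (((h1.const_mul ((2:ℝ) ^ d)).add
    (h2.const_mul ((2:ℝ) ^ d * (2 * π) ^ (-((d : ℝ) / 2))))) ) ?_ ?_
  · apply Measurable.aestronglyMeasurable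
    fun_prop
  · filter_upwards [self_mem_ae_restrict measurableSet_Ioi] with ξ hξ
    have hξ0 : (0:ℝ) < ξ := hξ
    set x : ℝ := (2 * π * ξ) ^ (-(1/2) : ℝ) with hx
    have hx0 : 0 ≤ x := rpow_nonneg (by positivity) _
    have hbound : (1 + x) ^ d ≤ 2 ^ d * (1 + x ^ d) := by
      calc (1 + x) ^ d ≤ (2 * max 1 x) ^ d := by
            apply pow_le_pow_left₀ (by positivity)
            have h1 := le_max_left 1 x
            have h2 := le_max_right 1 x
            linarith
        _ = 2 ^ d * (max 1 x) ^ d := mul_pow _ _ _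
        _ ≤ 2 ^ d * (1 + x ^ d) := by
            gcongr
            rcases le_total x 1 with h | h
            · rw [max_eq_left h, one_pow]
              nlinarith [pow_nonneg hx0 d]
            · rw [max_eq_right h]
              nlinarith [pow_nonneg hx0 d]
    have hxd : x ^ d = (2 * π) ^ (-((d : ℝ) / 2)) * ξ ^ (-((d : ℝ) / 2)) := by
      rw [hx, ← Real.rpow_natCast ((2 * π * ξ) ^ (-(1/2) : ℝ)) d,
        ← Real.rpow_mul (by positivity),
        show (-(1/2) : ℝ) * (d:ℕ) = -((d:ℝ)/2) by push_cast; ring,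
        Real.mul_rpow (by positivity) hξ0.le]
    have hnn : 0 ≤ Real.exp (-ξ) * ξ ^ (α - 1) * (1 + x) ^ d := by positivity
    rw [Real.norm_of_nonneg hnn]
    have hsplit : Real.exp (-ξ) * ξ ^ (α - 1) * (1 + x) ^ d
        ≤ Real.exp (-ξ) * ξ ^ (α - 1) * (2 ^ d * (1 + x ^ d)) := by
      apply mul_le_mul_of_nonneg_left hbound (by positivity)
    have hrw : ξ ^ (α - 1) * ξ ^ (-((d : ℝ) / 2)) = ξ ^ (α - (d : ℝ) / 2 - 1) := by
      rw [← Real.rpow_add hξ0]; ring_nf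
    refine hsplit.trans (le_of_eq ?_)
    simp only [Pi.add_apply]
    rw [hxd]
    linear_combination (2^d * (2*π) ^ (-((d:ℝ)/2)) * Real.exp (-ξ)) * hrw

lemma aux_sqrt {L m ξ : ℝ} (hL : 1 ≤ L) (hm : 1 ≤ m) (hξ : 0 < ξ) :
    1 + Real.sqrt (π / (π ^ 2 / (2 * L ^ 2 * m) * ξ)) / 2
      ≤ L * Real.sqrt m * (1 + (2 * π * ξ) ^ (-(1/2) : ℝ)) := by
  have hL0 : (0:ℝ) < L := by linarith
  have hm0 : (0:ℝ) < m := by linarith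
  have hπ : (0:ℝ) < π := pi_pos
  have h2πξ : (0:ℝ) < 2 * π * ξ := by positivity
  have hsm : 1 ≤ Real.sqrt m := by
    rw [show (1:ℝ) = Real.sqrt 1 by simp]
    exact Real.sqrt_le_sqrt hm
  have hy : (0:ℝ) ≤ (2 * π * ξ) ^ (-(1/2) : ℝ) := Real.rpow_nonneg h2πξ.le _
  have hE : Real.sqrt (π / (π ^ 2 / (2 * L ^ 2 * m) * ξ)) / 2
      = L * Real.sqrt m * (2 * π * ξ) ^ (-(1/2) : ℝ) := by
    rw [Real.rpow_neg h2πξ.le, ← Real.sqrt_eq_rpow]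
    rw [← sq_eq_sq₀ (by positivity) (by positivity)]
    rw [div_pow, mul_pow, mul_pow, inv_pow, Real.sq_sqrt (by positivity),
      Real.sq_sqrt hm0.le, Real.sq_sqrt h2πξ.le]
    field_simp
  rw [hE]
  nlinarith [mul_le_mul_of_nonneg_right (one_le_mul_of_one_le_of_one_le hL hsm) hy]

/-- bound on `Tr (H_{Λ,N}(0,0) + m)^{-α}` for the Neumann Laplacian `-Δ/2`
on a cube of edge length `L ≥ 1`, `m ≥ 1`, `α > d/2`, via its explicit spectrum. -/
theorem stmt8 (d : ℕ) (α : ℝ) (hα : (d : ℝ) / 2 < α) (L m : ℝ)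
    (hL : 1 ≤ L) (hm : 1 ≤ m) :
    IntegrableOn
      (fun ξ : ℝ => Real.exp (-ξ) * ξ ^ (α - 1) * (1 + (2 * π * ξ) ^ (-(1/2) : ℝ)) ^ d)
      (Set.Ioi 0) ∧
    ∑' n : Fin d → ℕ, (π ^ 2 * (∑ i, ((n i : ℝ)) ^ 2) / (2 * L ^ 2) + m) ^ (-α)
      ≤ L ^ d * m ^ ((d : ℝ) / 2 - α) * (1 / Real.Gamma α) *
        ∫ ξ in Set.Ioi (0 : ℝ),
          Real.exp (-ξ) * ξ ^ (α - 1) * (1 + (2 * π * ξ) ^ (-(1/2) : ℝ)) ^ d := by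
  have hπ := pi_pos
  have hL0 : (0:ℝ) < L := by linarith
  have hm0 : (0:ℝ) < m := by linarith
  have hα0 : 0 < α := lt_of_le_of_lt (by positivity) hα
  have hΓ : 0 < Real.Gamma α := Real.Gamma_pos_of_pos hα0
  have hGint := aux_integrable d hα
  refine ⟨hGint, ?_⟩
  set G : ℝ → ℝ :=
    fun ξ => Real.exp (-ξ) * ξ ^ (α - 1) * (1 + (2 * π * ξ) ^ (-(1/2) : ℝ)) ^ d with hGdef
  set IG : ℝ := ∫ ξ in Set.Ioi (0:ℝ), G ξ with hIGdef
  have hIG0 : 0 ≤ IG := by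
    apply setIntegral_nonneg measurableSet_Ioi
    intro ξ hξ
    have h1 : (0:ℝ) ≤ (2*π*ξ) ^ (-(1/2):ℝ) :=
      Real.rpow_nonneg (mul_nonneg (by positivity) (le_of_lt hξ)) _
    have h2 : (0:ℝ) ≤ ξ ^ (α - 1) := Real.rpow_nonneg (le_of_lt hξ) _
    positivity
  set a' : ℝ := π ^ 2 / (2 * L ^ 2 * m) with ha'def
  have ha'0 : 0 < a' := by positivity
  set c : (Fin d → ℕ) → ℝ :=
    fun n => π ^ 2 * (∑ i, ((n i : ℝ)) ^ 2) / (2 * L ^ 2) + m with hcdef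
  have hS : ∀ n : Fin d → ℕ, 0 ≤ ∑ i, ((n i : ℝ)) ^ 2 :=
    fun n => Finset.sum_nonneg (fun i _ => sq_nonneg _)
  have hc0 : ∀ n, 0 < c n := fun n => by
    have := hS n; rw [hcdef]; positivity
  have hr : ∀ n, c n / m = 1 + a' * (∑ i, ((n i : ℝ)) ^ 2) := by
    intro n; rw [hcdef, ha'def]; field_simp; ring
  -- Step A : per-term Gamma representation
  have stepA : ∀ n, ENNReal.ofReal ((c n) ^ (-α)) =
      ENNReal.ofReal (m ^ (-α) / Real.Gamma α) *
        ∫⁻ ξ in Ioi (0:ℝ), ENNReal.ofReal (ξ ^ (α - 1) * Real.exp (-((c n / m) * ξ))) := by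
    intro n
    rw [aux_gamma (by positivity) hα0, ← ENNReal.ofReal_mul (by positivity)]
    congr 1
    rw [one_div_div, Real.div_rpow hm0.le (hc0 n).le, Real.rpow_neg hm0.le,
      Real.rpow_neg (hc0 n).le]
    have h1 : (0:ℝ) < m ^ α := Real.rpow_pos_of_pos hm0 _
    have h2 : (0:ℝ) < (c n) ^ α := Real.rpow_pos_of_pos (hc0 n) _
    field_simp
  -- Step B : sum and swap
  have stepB : ∑' n : Fin d → ℕ, ENNReal.ofReal ((c n) ^ (-α))
      = ENNReal.ofReal (m ^ (-α) / Real.Gamma α) *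
        ∫⁻ ξ in Ioi (0:ℝ), ∑' n : Fin d → ℕ,
          ENNReal.ofReal (ξ ^ (α - 1) * Real.exp (-((c n / m) * ξ))) := by
    rw [tsum_congr stepA, ENNReal.tsum_mul_left,
      lintegral_tsum (fun n => (Measurable.ennreal_ofReal (by fun_prop)).aemeasurable)]
  -- Step C+D : pointwise bound of the inner sum, for ξ > 0
  have stepC : ∀ ξ : ℝ, ξ ∈ Ioi (0:ℝ) →
      (∑' n : Fin d → ℕ, ENNReal.ofReal (ξ ^ (α - 1) * Real.exp (-((c n / m) * ξ))))
        ≤ ENNReal.ofReal ((L * Real.sqrt m) ^ d) * ENNReal.ofReal (G ξ) := by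
    intro ξ hξ
    have hξ0 : (0:ℝ) < ξ := hξ
    have hb0 : 0 < a' * ξ := by positivity
    have hfac : ∀ n : Fin d → ℕ,
        ENNReal.ofReal (ξ ^ (α - 1) * Real.exp (-((c n / m) * ξ)))
          = ENNReal.ofReal (ξ ^ (α - 1) * Real.exp (-ξ)) *
              ∏ i, ENNReal.ofReal (Real.exp (-(a' * ξ) * ((n i : ℝ)) ^ 2)) := by
      intro n
      have hprod : Real.exp (-((c n / m) * ξ))
          = Real.exp (-ξ) * ∏ i, Real.exp (-(a' * ξ) * ((n i : ℝ)) ^ 2) := by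
        rw [← Real.exp_sum, ← Real.exp_add]
        congr 1
        rw [hr n]
        have : ∑ i, -(a' * ξ) * ((n i : ℝ)) ^ 2 = -(a' * ξ) * ∑ i, ((n i : ℝ)) ^ 2 := by
          rw [Finset.mul_sum]
        rw [this]; ring
      rw [hprod, ← mul_assoc, ENNReal.ofReal_mul (by positivity),
        ENNReal.ofReal_prod_of_nonneg (fun i _ => (Real.exp_pos _).le)]
    rw [tsum_congr hfac, ENNReal.tsum_mul_left,
      aux_tsum_pi (fun k : ℕ => ENNReal.ofReal (Real.exp (-(a' * ξ) * (k:ℝ)^2))) d]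
    have hsum_le : (∑' k : ℕ, ENNReal.ofReal (Real.exp (-(a' * ξ) * (k : ℝ) ^ 2)))
        ≤ ENNReal.ofReal (L * Real.sqrt m * (1 + (2 * π * ξ) ^ (-(1/2) : ℝ))) := by
      rw [← ENNReal.ofReal_tsum_of_nonneg (fun k => (Real.exp_pos _).le) (aux_summable hb0)]
      apply ENNReal.ofReal_le_ofReal
      refine (aux_sum_le hb0).trans ?_
      exact aux_sqrt hL hm hξ0
    calc ENNReal.ofReal (ξ ^ (α - 1) * Real.exp (-ξ)) *
          (∑' k : ℕ, ENNReal.ofReal (Real.exp (-(a' * ξ) * (k : ℝ) ^ 2))) ^ d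
        ≤ ENNReal.ofReal (ξ ^ (α - 1) * Real.exp (-ξ)) *
          (ENNReal.ofReal (L * Real.sqrt m * (1 + (2 * π * ξ) ^ (-(1/2) : ℝ)))) ^ d := by
          gcongr
      _ = ENNReal.ofReal ((L * Real.sqrt m) ^ d) * ENNReal.ofReal (G ξ) := by
          rw [← ENNReal.ofReal_pow (by positivity), ← ENNReal.ofReal_mul (by positivity),
            ← ENNReal.ofReal_mul (by positivity)]
          congr 1
          rw [hGdef]
          rw [mul_pow]
          ring
  -- Step E : integrate the bound
  have stepE : (∫⁻ ξ in Ioi (0:ℝ), ∑' n : Fin d → ℕ,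
        ENNReal.ofReal (ξ ^ (α - 1) * Real.exp (-((c n / m) * ξ))))
      ≤ ENNReal.ofReal ((L * Real.sqrt m) ^ d) * ENNReal.ofReal IG := by
    have h1 : (∫⁻ ξ in Ioi (0:ℝ), ∑' n : Fin d → ℕ,
          ENNReal.ofReal (ξ ^ (α - 1) * Real.exp (-((c n / m) * ξ))))
        ≤ ∫⁻ ξ in Ioi (0:ℝ), ENNReal.ofReal ((L * Real.sqrt m) ^ d) * ENNReal.ofReal (G ξ) := by
      apply lintegral_mono_ae
      filter_upwards [self_mem_ae_restrict measurableSet_Ioi] with ξ hξ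
      exact stepC ξ hξ
    refine h1.trans ?_
    rw [lintegral_const_mul' _ _ ENNReal.ofReal_ne_top]
    gcongr
    rw [hIGdef, ← ofReal_integral_eq_lintegral_ofReal hGint ?_]
    filter_upwards [self_mem_ae_restrict measurableSet_Ioi] with ξ hξ
    have hξ0 : (0:ℝ) < ξ := hξ
    have h1 : (0:ℝ) ≤ (2*π*ξ) ^ (-(1/2):ℝ) :=
      Real.rpow_nonneg (mul_nonneg (by positivity) hξ0.le) _
    have h2 : (0:ℝ) ≤ ξ ^ (α - 1) := Real.rpow_nonneg hξ0.le _
    rw [hGdef]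
    positivity
  -- combine
  have hle : ∑' n : Fin d → ℕ, ENNReal.ofReal ((c n) ^ (-α))
      ≤ ENNReal.ofReal (m ^ (-α) / Real.Gamma α *
          ((L * Real.sqrt m) ^ d * IG)) := by
    rw [stepB, ENNReal.ofReal_mul (by positivity), ENNReal.ofReal_mul (by positivity)]
    exact mul_le_mul_right (stepE.trans (le_of_eq rfl)) _
  -- summability
  have hsummable : Summable (fun n : Fin d → ℕ => (c n) ^ (-α)) := by
    have hne : ∑' n : Fin d → ℕ, ENNReal.ofReal ((c n) ^ (-α)) ≠ ⊤ :=
      ne_top_of_le_ne_top ENNReal.ofReal_ne_top hle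
    have h2 := ENNReal.tsum_coe_ne_top_iff_summable.1 hne
    refine Summable.congr (NNReal.summable_coe.2 h2) (fun n => ?_)
    exact Real.coe_toNNReal _ (Real.rpow_nonneg (hc0 n).le _)
  rw [← ENNReal.ofReal_tsum_of_nonneg (fun n => Real.rpow_nonneg (hc0 n).le _) hsummable] at hle
  have hfinal := (ENNReal.ofReal_le_ofReal_iff (by positivity)).1 hle
  refine hfinal.trans (le_of_eq ?_)
  have hmd : m ^ (-α) * (Real.sqrt m) ^ d = m ^ ((d:ℝ)/2 - α) := by
    rw [Real.sqrt_eq_rpow, ← Real.rpow_natCast (m ^ (1/2:ℝ)) d, ← Real.rpow_mul hm0.le,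
      ← Real.rpow_add hm0]
    congr 1
    ring
  rw [mul_pow]
  calc m ^ (-α) / Real.Gamma α * (L ^ d * (Real.sqrt m) ^ d * IG)
      = L ^ d * (m ^ (-α) * (Real.sqrt m) ^ d) * (1 / Real.Gamma α) * IG := by ring
    _ = L ^ d * m ^ ((d:ℝ)/2 - α) * (1 / Real.Gamma α) * IG := by rw [hmd]
end

section
/- Let p ∈ (1,∞), set Υ_p := ( ∫_ℝ (1+ξ²)^{−p/2} dξ )^{−1}, and for ε > 0 define the probability density δ_ε(E) := Υ_p ε^{p−1} (E² + ε²)^{−p/2} on ℝ. Let f : ℝ → ℂ be continuously differentiable with compact support and let (δ_ε * f)(E) := ∫_ℝ δ_ε(E − E') f(E') dE'. Then there exists a function C : (0,1] → [0,∞) with lim_{ε↓0} C(ε) = 0 such that |f(E) − (δ_ε * f)(E)| ≤ C(ε) · δ_1(E) for all E ∈ ℝ and all ε ∈ (0,1]. -/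
open Real MeasureTheory Filter Topology

/-!
Write `f E - (δ_ε * f)(E) = ∫ δ_ε(t) (f E - f (E - t)) dt` and split at `|t| = √ε`: the Lipschitz
bound for `f` controls the core by `K √ε`, and the mass of `δ_ε` beyond `√ε` is
`O(ε^{p-1} (√ε)^{1-p}) = O(ε^{(p-1)/2})`. On the bounded region `|E| ≤ max (2R) 1` around the
support `[-R, R]` of `f`, `δ_1` is bounded below, which turns this into a multiple of `δ_1(E)`.
Far from the support `f E = 0`, and for `E'` in the support `(E - E')² ≥ (E² + 1)/8`, so that
`δ_ε(E - E') ≤ 8^{p/2} ε^{p-1} δ_1(E)` and `|(δ_ε * f)(E)| ≤ 8^{p/2} ε^{p-1} ‖f‖₁ δ_1(E)`.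
-/

section Kernel

variable {p ε : ℝ}

lemma sq_add_sq_rpow_eq (hε : 0 < ε) (t : ℝ) :
    (t ^ 2 + ε ^ 2) ^ (-(p / 2)) = ε ^ (-p) * (1 + (t / ε) ^ 2) ^ (-(p / 2)) := by
  have hsplit : t ^ 2 + ε ^ 2 = ε ^ 2 * (1 + (t / ε) ^ 2) := by field_simp; ring
  rw [hsplit, mul_rpow (by positivity) (by positivity), ← rpow_natCast, ← rpow_mul hε.le]
  congr 2
  push_cast; ring

lemma integrable_one_add_sq_rpow (hp : 1 < p) :
    Integrable fun ξ : ℝ => (1 + ξ ^ 2) ^ (-(p / 2)) := by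
  simpa [neg_div] using integrable_rpow_neg_one_add_norm_sq (E := ℝ) (μ := volume) (r := p)
    (by simpa using hp)

lemma integral_one_add_sq_rpow_pos (hp : 1 < p) : 0 < ∫ ξ : ℝ, (1 + ξ ^ 2) ^ (-(p / 2)) := by
  refine (integral_pos_iff_support_of_nonneg (fun ξ => by positivity)
    (integrable_one_add_sq_rpow hp)).2 ?_
  rw [Function.support_eq_univ fun ξ => (rpow_pos_of_pos (by positivity) _).ne']
  simp

lemma integrable_sq_add_sq_rpow (hp : 1 < p) (hε : 0 < ε) :
    Integrable fun t : ℝ => (t ^ 2 + ε ^ 2) ^ (-(p / 2)) := by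
  simp_rw [sq_add_sq_rpow_eq hε]
  exact ((integrable_one_add_sq_rpow hp).comp_div hε.ne').const_mul _

lemma integral_sq_add_sq_rpow (hε : 0 < ε) :
    ∫ t : ℝ, (t ^ 2 + ε ^ 2) ^ (-(p / 2)) = ε ^ (1 - p) * ∫ ξ : ℝ, (1 + ξ ^ 2) ^ (-(p / 2)) := by
  simp_rw [sq_add_sq_rpow_eq hε]
  rw [integral_const_mul, Measure.integral_comp_div (fun ξ => (1 + ξ ^ 2) ^ (-(p / 2))),
    abs_of_pos hε, smul_eq_mul, ← mul_assoc, ← rpow_add_one hε.ne']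
  ring_nf

lemma setIntegral_Ioi_sq_add_sq_rpow_le (hp : 1 < p) (hε : 0 < ε) {c : ℝ} (hc : 0 < c) :
    ∫ t in Set.Ioi c, (t ^ 2 + ε ^ 2) ^ (-(p / 2)) ≤ c ^ (1 - p) / (p - 1) := by
  calc ∫ t in Set.Ioi c, (t ^ 2 + ε ^ 2) ^ (-(p / 2))
      ≤ ∫ t in Set.Ioi c, t ^ (-p) := by
        refine setIntegral_mono_on (integrable_sq_add_sq_rpow hp hε).integrableOn
          (integrableOn_Ioi_rpow_of_lt (by linarith) hc) measurableSet_Ioi fun t ht => ?_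
        have ht : 0 < t := hc.trans ht
        calc (t ^ 2 + ε ^ 2) ^ (-(p / 2)) ≤ (t ^ 2) ^ (-(p / 2)) :=
              rpow_le_rpow_of_nonpos (by positivity) (by nlinarith) (by linarith)
          _ = t ^ (-p) := by rw [← rpow_natCast, ← rpow_mul ht.le]; push_cast; ring_nf
    _ = c ^ (1 - p) / (p - 1) := by
        rw [integral_Ioi_rpow_of_lt (by linarith) hc, ← neg_div_neg_eq]
        ring_nf

lemma setIntegral_abs_gt_sq_add_sq_rpow_le (hp : 1 < p) (hε : 0 < ε) {c : ℝ} (hc : 0 < c) :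
    ∫ t in {t : ℝ | c < |t|}, (t ^ 2 + ε ^ 2) ^ (-(p / 2)) ≤ 2 * (c ^ (1 - p) / (p - 1)) := by
  have hmeas : MeasurableSet {t : ℝ | c < |t|} := measurableSet_lt measurable_const measurable_abs
  have hind : ∀ t : ℝ, {t : ℝ | c < |t|}.indicator (fun t => (t ^ 2 + ε ^ 2) ^ (-(p / 2))) t
      = (Set.Ioi c).indicator (fun u => (u ^ 2 + ε ^ 2) ^ (-(p / 2))) |t| := by
    intro t; simp [Set.indicator, sq_abs]
  rw [← integral_indicator hmeas, funext hind, integral_comp_abs (f := (Set.Ioi c).indicator _),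
    setIntegral_indicator measurableSet_Ioi, Set.Ioi_inter_Ioi, max_eq_right hc.le]
  gcongr
  exact setIntegral_Ioi_sq_add_sq_rpow_le hp hε hc

end Kernel

section ApproximateIdentity

variable {F : Type*} [NormedAddCommGroup F] [NormedSpace ℝ F]

lemma norm_integral_smul_le_of_le {α : Type*} [MeasurableSpace α] {μ : Measure α}
    {φ : α → ℝ} {f : α → F} (hf : Integrable f μ) {B : ℝ} (hB : ∀ y, f y ≠ 0 → ‖φ y‖ ≤ B) :
    ‖∫ y, φ y • f y ∂μ‖ ≤ B * ∫ y, ‖f y‖ ∂μ := by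
  rw [← integral_const_mul]
  refine norm_integral_le_of_norm_le (hf.norm.const_mul B) (ae_of_all _ fun y => ?_)
  by_cases hy : f y = 0
  · simp [hy]
  · rw [norm_smul]
    exact mul_le_mul_of_nonneg_right (hB y hy) (norm_nonneg _)

variable [CompleteSpace F] {φ : ℝ → ℝ} {f : ℝ → F}

lemma sub_integral_comp_sub_smul_eq (hφ : Integrable φ) (hφ1 : ∫ t, φ t = 1)
    (hf : Continuous f) {M : ℝ} (hM : ∀ x, ‖f x‖ ≤ M) (x : ℝ) :
    f x - ∫ y, φ (x - y) • f y = ∫ t, φ t • (f x - f (x - t)) := by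
  have hshift : Integrable fun t => φ t • f (x - t) :=
    hφ.smul_bdd M (by fun_prop) (ae_of_all _ fun t => hM _)
  have hconst : f x = ∫ t, φ t • f x := by rw [integral_smul_const, hφ1, one_smul]
  have hsubst := integral_sub_left_eq_self (fun t => φ t • f (x - t)) volume x
  simp only [sub_sub_cancel] at hsubst
  simp_rw [smul_sub]
  rw [integral_sub (hφ.smul_const _) hshift, ← hconst, ← hsubst]

lemma norm_sub_integral_comp_sub_smul_le (hφ0 : ∀ t, 0 ≤ φ t) (hφ : Integrable φ)
    (hφ1 : ∫ t, φ t = 1) {K : NNReal} (hK : LipschitzWith K f) {M : ℝ} (hM : ∀ x, ‖f x‖ ≤ M)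
    {c : ℝ} (hc : 0 ≤ c) (x : ℝ) :
    ‖f x - ∫ y, φ (x - y) • f y‖ ≤ K * c + 2 * M * ∫ t in {t : ℝ | c < |t|}, φ t := by
  set s := {t : ℝ | c < |t|}
  have hfc := hK.continuous
  have hs : MeasurableSet s := measurableSet_lt measurable_const measurable_abs
  have hdiff : ∀ t, ‖f x - f (x - t)‖ ≤ 2 * M := fun t =>
    (norm_sub_le _ _).trans (by linarith [hM x, hM (x - t)])
  have hg : Integrable fun t => φ t * ‖f x - f (x - t)‖ :=
    hφ.mul_bdd (c := 2 * M) (by fun_prop) (ae_of_all _ fun t => by simpa using hdiff t)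
  have hnear : ∫ t in sᶜ, φ t * ‖f x - f (x - t)‖ ≤ K * c := by
    calc ∫ t in sᶜ, φ t * ‖f x - f (x - t)‖ ≤ ∫ t in sᶜ, φ t * (K * c) := by
          refine setIntegral_mono_on hg.integrableOn (hφ.integrableOn.mul_const _) hs.compl
            fun t ht => mul_le_mul_of_nonneg_left ?_ (hφ0 t)
          calc ‖f x - f (x - t)‖ ≤ K * dist x (x - t) := by
                rw [← dist_eq_norm]; exact hK.dist_le_mul x (x - t)
            _ ≤ K * c := by
                rw [dist_eq_norm, sub_sub_cancel, Real.norm_eq_abs]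
                exact mul_le_mul_of_nonneg_left (not_lt.1 ht) K.coe_nonneg
      _ = (∫ t in sᶜ, φ t) * (K * c) := integral_mul_const _ _
      _ ≤ 1 * (K * c) := by
          gcongr
          rw [← hφ1]
          exact setIntegral_le_integral hφ (ae_of_all _ hφ0)
      _ = K * c := one_mul _
  have hfar : ∫ t in s, φ t * ‖f x - f (x - t)‖ ≤ 2 * M * ∫ t in s, φ t := by
    rw [mul_comm, ← integral_mul_const]
    exact setIntegral_mono_on hg.integrableOn (hφ.integrableOn.mul_const _) hs
      fun t _ => mul_le_mul_of_nonneg_left (hdiff t) (hφ0 t)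
  calc ‖f x - ∫ y, φ (x - y) • f y‖ ≤ ∫ t, φ t * ‖f x - f (x - t)‖ := by
        rw [sub_integral_comp_sub_smul_eq hφ hφ1 hfc hM]
        refine norm_integral_le_of_norm_le hg (ae_of_all _ fun t => ?_)
        rw [norm_smul, Real.norm_of_nonneg (hφ0 t)]
    _ = (∫ t in s, φ t * ‖f x - f (x - t)‖) + ∫ t in sᶜ, φ t * ‖f x - f (x - t)‖ :=
        (integral_add_compl hs hg).symm
    _ ≤ K * c + 2 * M * ∫ t in s, φ t := by linarith

end ApproximateIdentity

noncomputable def approxDeltaConst (p : ℝ) : ℝ := (∫ ξ : ℝ, (1 + ξ ^ 2) ^ (-(p / 2)))⁻¹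

noncomputable def approxDelta (p ε E : ℝ) : ℝ :=
  approxDeltaConst p * ε ^ (p - 1) * (E ^ 2 + ε ^ 2) ^ (-(p / 2))

section ApproxDelta

variable {p ε : ℝ}

lemma approxDeltaConst_pos (hp : 1 < p) : 0 < approxDeltaConst p :=
  inv_pos.2 (integral_one_add_sq_rpow_pos hp)

lemma approxDeltaConst_nonneg (p : ℝ) : 0 ≤ approxDeltaConst p :=
  inv_nonneg.2 (integral_nonneg fun ξ => by positivity)

lemma approxDelta_nonneg (hε : 0 ≤ ε) (E : ℝ) : 0 ≤ approxDelta p ε E := by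
  have := approxDeltaConst_nonneg p
  unfold approxDelta; positivity

lemma integrable_approxDelta (hp : 1 < p) (hε : 0 < ε) : Integrable (approxDelta p ε) :=
  (integrable_sq_add_sq_rpow hp hε).const_mul _

lemma integral_approxDelta (hp : 1 < p) (hε : 0 < ε) : ∫ t, approxDelta p ε t = 1 := by
  have hI := integral_one_add_sq_rpow_pos hp
  simp only [approxDelta, approxDeltaConst]
  rw [integral_const_mul, integral_sq_add_sq_rpow hε]
  calc _ = (∫ ξ : ℝ, (1 + ξ ^ 2) ^ (-(p / 2)))⁻¹ * (∫ ξ : ℝ, (1 + ξ ^ 2) ^ (-(p / 2)))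
        * (ε ^ (p - 1) * ε ^ (1 - p)) := by ring
    _ = 1 := by rw [inv_mul_cancel₀ hI.ne', ← rpow_add hε]; simp

lemma setIntegral_abs_gt_approxDelta_le (hp : 1 < p) (hε : 0 < ε) {c : ℝ} (hc : 0 < c) :
    ∫ t in {t : ℝ | c < |t|}, approxDelta p ε t
      ≤ 2 * approxDeltaConst p / (p - 1) * ε ^ (p - 1) * c ^ (1 - p) := by
  have := approxDeltaConst_nonneg p
  simp only [approxDelta]
  rw [integral_const_mul]
  calc approxDeltaConst p * ε ^ (p - 1) * ∫ t in {t : ℝ | c < |t|}, (t ^ 2 + ε ^ 2) ^ (-(p / 2))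
      ≤ approxDeltaConst p * ε ^ (p - 1) * (2 * (c ^ (1 - p) / (p - 1))) := by
        gcongr; exact setIntegral_abs_gt_sq_add_sq_rpow_le hp hε hc
    _ = _ := by ring

lemma approxDelta_le_of_mul_le (hp : 0 ≤ p) {a : ℝ} (ha : 0 < a) (hε : 0 ≤ ε) {t E : ℝ}
    (h : a * (E ^ 2 + 1) ≤ t ^ 2 + ε ^ 2) :
    approxDelta p ε t ≤ a ^ (-(p / 2)) * ε ^ (p - 1) * approxDelta p 1 E := by
  have := approxDeltaConst_nonneg p
  calc approxDelta p ε t ≤ approxDeltaConst p * ε ^ (p - 1) * (a * (E ^ 2 + 1)) ^ (-(p / 2)) := by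
        unfold approxDelta
        exact mul_le_mul_of_nonneg_left (rpow_le_rpow_of_nonpos (by positivity) h (by linarith))
          (by positivity)
    _ = a ^ (-(p / 2)) * ε ^ (p - 1) * approxDelta p 1 E := by
        rw [mul_rpow ha.le (by positivity)]
        simp only [approxDelta, one_rpow, one_pow]
        ring

lemma approxDeltaConst_mul_le_approxDelta_one (hp : 0 ≤ p) {r E : ℝ} (hE : |E| ≤ r) :
    approxDeltaConst p * (r ^ 2 + 1) ^ (-(p / 2)) ≤ approxDelta p 1 E := by
  have := approxDeltaConst_nonneg p
  simp only [approxDelta, one_rpow, one_pow, mul_one]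
  exact mul_le_mul_of_nonneg_left (rpow_le_rpow_of_nonpos (by positivity)
    (by nlinarith [sq_abs E, abs_nonneg E]) (by linarith)) this

end ApproxDelta

section ApproxDeltaConvolution

variable {F : Type*} [NormedAddCommGroup F] [NormedSpace ℝ F] {p ε : ℝ} {f : ℝ → F}

lemma norm_sub_integral_approxDelta_smul_le [CompleteSpace F] (hp : 1 < p) {K : NNReal}
    (hK : LipschitzWith K f) {M : ℝ} (hM : ∀ x, ‖f x‖ ≤ M) (hε : 0 < ε) (x : ℝ) :
    ‖f x - ∫ y, approxDelta p ε (x - y) • f y‖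
      ≤ K * √ε + 2 * M * (2 * approxDeltaConst p / (p - 1) * ε ^ ((p - 1) / 2)) := by
  have hM0 : 0 ≤ M := (norm_nonneg _).trans (hM 0)
  have hsqrt : 0 < √ε := sqrt_pos.2 hε
  have hpow : ε ^ (p - 1) * √ε ^ (1 - p) = ε ^ ((p - 1) / 2) := by
    rw [sqrt_eq_rpow, ← rpow_mul hε.le, ← rpow_add hε]
    ring_nf
  refine (norm_sub_integral_comp_sub_smul_le (approxDelta_nonneg hε.le)
    (integrable_approxDelta hp hε) (integral_approxDelta hp hε) hK hM hsqrt.le x).trans ?_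
  gcongr
  calc ∫ t in {t : ℝ | √ε < |t|}, approxDelta p ε t
      ≤ 2 * approxDeltaConst p / (p - 1) * ε ^ (p - 1) * √ε ^ (1 - p) :=
        setIntegral_abs_gt_approxDelta_le hp hε hsqrt
    _ = 2 * approxDeltaConst p / (p - 1) * ε ^ ((p - 1) / 2) := by rw [mul_assoc, hpow]

lemma norm_integral_approxDelta_smul_le (hp : 0 ≤ p) (hε : 0 ≤ ε) (hf : Integrable f) {R : ℝ}
    (hfR : ∀ y, R ≤ |y| → f y = 0) {x : ℝ} (hx₁ : 1 ≤ |x|) (hxR : 2 * R ≤ |x|) :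
    ‖∫ y, approxDelta p ε (x - y) • f y‖
      ≤ 8 ^ (p / 2) * ε ^ (p - 1) * approxDelta p 1 x * ∫ y, ‖f y‖ := by
  refine norm_integral_smul_le_of_le hf fun y hy => ?_
  have hyR : |y| < R := not_le.1 fun h => hy (hfR y h)
  have hxy : |x| / 2 ≤ |x - y| := by linarith [abs_sub_abs_le_abs_sub x y]
  have hgeo : 8⁻¹ * (x ^ 2 + 1) ≤ (x - y) ^ 2 + ε ^ 2 := by
    nlinarith [sq_abs x, sq_abs (x - y), mul_le_mul hxy hxy (by positivity) (abs_nonneg _)]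
  rw [norm_of_nonneg (approxDelta_nonneg hε _)]
  convert approxDelta_le_of_mul_le hp (by norm_num) hε hgeo using 3
  rw [inv_rpow (by norm_num), rpow_neg (by norm_num), inv_inv]

lemma norm_sub_integral_approxDelta_smul_le_mul [CompleteSpace F] (hp : 1 < p) {K : NNReal}
    (hK : LipschitzWith K f) {M : ℝ} (hM : ∀ x, ‖f x‖ ≤ M) (hf : Integrable f) {R : ℝ}
    (hfR : ∀ y, R ≤ |y| → f y = 0) (hε : 0 < ε) (x : ℝ) :
    ‖f x - ∫ y, approxDelta p ε (x - y) • f y‖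
      ≤ ((approxDeltaConst p * (max (2 * R) 1 ^ 2 + 1) ^ (-(p / 2)))⁻¹
          * (K * √ε + 2 * M * (2 * approxDeltaConst p / (p - 1) * ε ^ ((p - 1) / 2)))
        + 8 ^ (p / 2) * ε ^ (p - 1) * ∫ y, ‖f y‖) * approxDelta p 1 x := by
  have hM0 : 0 ≤ M := (norm_nonneg _).trans (hM 0)
  have := approxDeltaConst_pos hp
  set c₀ := approxDeltaConst p * (max (2 * R) 1 ^ 2 + 1) ^ (-(p / 2))
  have hc₀ : 0 < c₀ := by positivity
  rcases le_or_gt |x| (max (2 * R) 1) with hx | hx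
  · calc _ ≤ K * √ε + 2 * M * (2 * approxDeltaConst p / (p - 1) * ε ^ ((p - 1) / 2)) :=
          norm_sub_integral_approxDelta_smul_le hp hK hM hε x
      _ = c₀⁻¹ * (K * √ε + 2 * M * (2 * approxDeltaConst p / (p - 1) * ε ^ ((p - 1) / 2)))
          * c₀ := by field_simp
      _ ≤ _ := by
        gcongr
        · exact le_add_of_nonneg_right (by positivity)
        · exact approxDeltaConst_mul_le_approxDelta_one (by linarith) hx
  · obtain ⟨hxR, hx₁⟩ := max_lt_iff.1 hx
    rw [hfR x (by linarith), zero_sub, norm_neg]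
    calc _ ≤ 8 ^ (p / 2) * ε ^ (p - 1) * approxDelta p 1 x * ∫ y, ‖f y‖ :=
          norm_integral_approxDelta_smul_le (by linarith) hε.le hf hfR hx₁.le hxR.le
      _ = 8 ^ (p / 2) * ε ^ (p - 1) * (∫ y, ‖f y‖) * approxDelta p 1 x := by ring
      _ ≤ _ := by
        gcongr
        · exact approxDelta_nonneg zero_le_one x
        · exact le_add_of_nonneg_left (by positivity)

end ApproxDeltaConvolution

/-- for the approximate delta family
`δ_ε(E) = Υ_p ε^{p-1} (E² + ε²)^{-p/2}` and `f ∈ C¹_0(ℝ)` there is `C(ε) → 0` as `ε ↓ 0`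
with `|f(E) - (δ_ε * f)(E)| ≤ C(ε) δ_1(E)` for all `E` and all `ε ∈ (0,1]`. -/
theorem stmt11 (p : ℝ) (hp : 1 < p) (Υ : ℝ)
    (hΥ : Υ = (∫ ξ : ℝ, (1 + ξ ^ 2) ^ (-(p / 2)))⁻¹)
    (δ : ℝ → ℝ → ℝ)
    (hδ : ∀ ε E, δ ε E = Υ * ε ^ (p - 1) * (E ^ 2 + ε ^ 2) ^ (-(p / 2)))
    (f : ℝ → ℂ) (hf : ContDiff ℝ 1 f) (hsupp : HasCompactSupport f) :
    ∃ C : ℝ → ℝ, (∀ ε ∈ Set.Ioc (0 : ℝ) 1, 0 ≤ C ε) ∧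
      Tendsto C (𝓝[>] (0 : ℝ)) (𝓝 0) ∧
      ∀ ε ∈ Set.Ioc (0 : ℝ) 1, ∀ E : ℝ,
        ‖f E - ∫ E' : ℝ, (δ ε (E - E') : ℂ) * f E'‖ ≤ C ε * δ 1 E := by
  subst hΥ
  obtain rfl : δ = approxDelta p := funext₂ hδ
  simp only [← Complex.real_smul]
  obtain ⟨K, hK⟩ := hf.lipschitzWith_of_hasCompactSupport hsupp one_ne_zero
  obtain ⟨M, hM⟩ := hf.continuous.bounded_above_of_compact_support hsupp
  obtain ⟨R, -, hfR⟩ := hsupp.exists_pos_le_norm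
  have hM0 : 0 ≤ M := (norm_nonneg _).trans (hM 0)
  have hΥ := approxDeltaConst_pos hp
  have hp1 : 0 < p - 1 := by linarith
  refine ⟨_, ?_, ?_, fun ε hε E => norm_sub_integral_approxDelta_smul_le_mul hp hK hM
    (hf.continuous.integrable_of_hasCompactSupport hsupp) hfR hε.1 E⟩
  · rintro ε ⟨hε, -⟩
    positivity
  · refine tendsto_nhdsWithin_of_tendsto_nhds (Continuous.tendsto' ?_ 0 0 ?_)
    · have := continuous_rpow_const (q := (p - 1) / 2) (by positivity)
      have := continuous_rpow_const hp1.le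
      fun_prop
    · simp [zero_rpow hp1.ne', zero_rpow (half_pos hp1).ne']
end
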